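/- arXiv:2602.11426 — 8 statements merged into one kernel-verified Lean document; each statement's English description precedes it below -/
import Mathlib

section
/- A set A ⊆ ℕ is a set of pointwise recurrence if and only if for every syndetic set S ⊆ ℕ there exists a finite set F ⊆ A such that for every syndetic set S' ⊆ S the set F ∩ (S − S') is nonempty (where S − S' := ⋃_{s'∈S'} (S − s')). -/
/-- The set `A - n`, difference taken inside the positive integers:
`A - n = {m : m >= 1 and m + n ∈ A}`. -/
def NSub (A : Set ℕ) (n : ℕ) : Set ℕ := {m : ℕ | 0 < m ∧ m + n ∈ A}

/-- `S ⊆ ℕ` is syndetic if `ℕ = ⋃_{i=1}^{N} (S - i)` for some `N ≥ 1`. -/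
def Syndetic (S : Set ℕ) : Prop :=
  ∃ N : ℕ, 0 < N ∧ ∀ m : ℕ, 0 < m → ∃ i : ℕ, 1 ≤ i ∧ i ≤ N ∧ m + i ∈ S

/-- A topological dynamical system: a nonempty compact metric space together with a
continuous self-map. -/
structure MetricDynSystem where
  carrier : Type
  [metric : MetricSpace carrier]
  [cpt : CompactSpace carrier]
  [carrier_nonempty : Nonempty carrier]
  map : carrier → carrier
  continuous_map : Continuous map

attribute [instance] MetricDynSystem.metric MetricDynSystem.cpt MetricDynSystem.carrier_nonempty

/-- A system is minimal if every point has dense forward orbit `{T^n x : n ∈ ℕ}`. -/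
def MetricDynSystem.Minimal (S : MetricDynSystem) : Prop :=
  ∀ x : S.carrier, Dense {y : S.carrier | ∃ n : ℕ, 0 < n ∧ S.map^[n] x = y}

/-- `A` is a set of pointwise recurrence: for every minimal system, every point `x` and
every open neighborhood `U` of `x`, some `n ∈ A` has `T^n x ∈ U`. -/
def PointwiseRecurrent (A : Set ℕ) : Prop :=
  ∀ S : MetricDynSystem, S.Minimal →
    ∀ (x : S.carrier) (U : Set S.carrier), IsOpen U → x ∈ U →
      ∃ n ∈ A, 0 < n ∧ S.map^[n] x ∈ U

open Filter
attribute [local instance] Ultrafilter.add Ultrafilter.addSemigroup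

namespace PWRAux

/-! ### Ultrafilter machinery -/

abbrev Beta := Ultrafilter ℕ

lemma mem_add {p q : Beta} {A : Set ℕ} :
    A ∈ p + q ↔ {a | {b | a + b ∈ A} ∈ q} ∈ p := by
  have h := Ultrafilter.eventually_add p q (· ∈ A)
  simp only [Filter.eventually_iff, Ultrafilter.mem_coe] at h
  exact h

lemma mem_pure_add {n : ℕ} {q : Beta} {A : Set ℕ} :
    A ∈ (pure n : Beta) + q ↔ {b | n + b ∈ A} ∈ q := by
  rw [mem_add]
  simp

lemma pure_zero_add (q : Beta) : (pure 0 : Beta) + q = q := by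
  apply Ultrafilter.coe_inj.mp
  apply Filter.ext
  intro A
  show A ∈ (pure 0 : Beta) + q ↔ A ∈ q
  rw [mem_pure_add]
  simp

/-- closed left ideal in βℕ -/
def IsLI (L : Set Beta) : Prop :=
  L.Nonempty ∧ IsClosed L ∧ ∀ q : Beta, ∀ p ∈ L, q + p ∈ L

lemma isLI_range (q : Beta) : IsLI (Set.range (· + q)) := by
  refine ⟨⟨q + q, q, rfl⟩, ?_, ?_⟩
  · exact (isCompact_range (Ultrafilter.continuous_add_left q)).isClosed
  · rintro r p ⟨s, rfl⟩
    exact ⟨r + s, add_assoc r s q⟩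

lemma mem_range_self_add (q : Beta) : q ∈ Set.range (· + q) :=
  ⟨pure 0, pure_zero_add q⟩

lemma exists_minimal_LI : ∃ L, IsLI L ∧ ∀ L', IsLI L' → L' ⊆ L → L' = L := by
  have H : ∀ c ⊆ {L : Set Beta | IsLI L}, IsChain (· ⊆ ·) c → c.Nonempty →
      ∃ lb ∈ {L : Set Beta | IsLI L}, ∀ s ∈ c, lb ⊆ s := by
    rintro c hc hchain ⟨L₀, hL₀⟩
    refine ⟨⋂₀ c, ⟨?_, ?_, ?_⟩, fun s hs => Set.sInter_subset_of_mem hs⟩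
    · haveI : Nonempty c := ⟨⟨L₀, hL₀⟩⟩
      have := IsCompact.nonempty_iInter_of_directed_nonempty_isCompact_isClosed
        (fun s : c => (s : Set Beta)) ?_ (fun s => (hc s.2).1)
        (fun s => (hc s.2).2.1.isCompact) (fun s => (hc s.2).2.1)
      · rwa [Set.sInter_eq_iInter]
      · rintro ⟨s, hs⟩ ⟨t, ht⟩
        rcases hchain.total hs ht with h | h
        · exact ⟨⟨s, hs⟩, subset_rfl, h⟩
        · exact ⟨⟨t, ht⟩, h, subset_rfl⟩
    · exact isClosed_sInter fun s hs => (hc hs).2.1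
    · intro q p hp s hs
      exact (hc hs).2.2 q p (hp s hs)
  obtain ⟨m, -, hm⟩ := zorn_superset_nonempty {L : Set Beta | IsLI L} H Set.univ
    ⟨⟨pure 0, trivial⟩, isClosed_univ, fun _ _ _ => trivial⟩
  exact ⟨m, hm.1, fun L' h1 h2 => h2.antisymm (hm.2 h1 h2)⟩

lemma range_eq_of_minimal {L : Set Beta} (hL : IsLI L)
    (hmin : ∀ L', IsLI L' → L' ⊆ L → L' = L) {q : Beta} (hq : q ∈ L) :
    Set.range (· + q) = L := by
  apply hmin _ (isLI_range q)
  rintro _ ⟨r, rfl⟩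
  exact hL.2.2 r q hq

lemma exists_mem_of_syndetic {L : Set Beta} (hL : IsLI L) {B : Set ℕ}
    (hB : Syndetic B) : ∃ p ∈ L, B ∈ p := by
  obtain ⟨q, hq⟩ := hL.1
  obtain ⟨N, hN, hsyn⟩ := hB
  set q' : Beta := (pure 1 : Beta) + q with hq'def
  have hq' : q' ∈ L := hL.2.2 _ q hq
  have hpos : {m : ℕ | 0 < m} ∈ q' := by
    rw [hq'def, mem_pure_add]
    exact Filter.univ_mem' fun b => Nat.add_pos_left Nat.one_pos b
  have hcover : {m : ℕ | 0 < m} ⊆ ⋃ i ∈ Set.Icc 1 N, {m : ℕ | m + i ∈ B} := by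
    intro m hm
    obtain ⟨i, h1, h2, h3⟩ := hsyn m hm
    exact Set.mem_biUnion ⟨h1, h2⟩ h3
  have hU : (⋃ i ∈ Set.Icc 1 N, {m : ℕ | m + i ∈ B}) ∈ q' :=
    Filter.mem_of_superset hpos hcover
  rw [Ultrafilter.finite_biUnion_mem_iff (Set.finite_Icc 1 N)] at hU
  obtain ⟨i, -, hi⟩ := hU
  refine ⟨(pure i : Beta) + q', hL.2.2 _ _ hq', ?_⟩
  rw [mem_pure_add]
  have : {b : ℕ | i + b ∈ B} = {m : ℕ | m + i ∈ B} := by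
    ext b; simp [Nat.add_comm]
  rwa [this]

lemma syndetic_pstar {L : Set Beta} (hL : IsLI L)
    (hmin : ∀ L', IsLI L' → L' ⊆ L → L' = L)
    {p : Beta} (hp : p ∈ L) {P : Set ℕ} (hP : P ∈ p) :
    Syndetic {n | {m | m + n ∈ P} ∈ p} := by
  set Pstar : Set ℕ := {n | {m | m + n ∈ P} ∈ p} with hPstar
  by_contra hcon
  rw [Syndetic] at hcon
  push_neg at hcon
  have hg : ∀ N : ℕ, ∃ m : ℕ, ∀ i, 1 ≤ i → i ≤ N → m + i ∉ Pstar := by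
    intro N
    rcases Nat.eq_zero_or_pos N with h | h
    · exact ⟨1, fun i h1 h2 => absurd (h1.trans h2) (by omega)⟩
    · obtain ⟨m, -, hm⟩ := hcon N h
      exact ⟨m, fun i h1 h2 => hm i h1 h2⟩
  choose g hg using hg
  have : (Filter.map g Filter.atTop).NeBot := Filter.map_neBot
  set q₀ : Beta := Ultrafilter.of (Filter.map g Filter.atTop) with hq₀def
  have hq₀le : (q₀ : Filter ℕ) ≤ Filter.map g Filter.atTop := Ultrafilter.of_le _
  have hD : ∀ i : ℕ, {t : ℕ | ∀ j, 1 ≤ j → j ≤ i → t + j ∉ Pstar} ∈ q₀ := by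
    intro i
    apply hq₀le
    rw [Filter.mem_map]
    apply Filter.mem_of_superset (Filter.Ici_mem_atTop i)
    intro N hN j h1 h2
    exact hg N j h1 (h2.trans hN)
  set q' : Beta := q₀ + ((pure 1 : Beta) + p) with hq'def
  have hq' : q' ∈ L := by
    have : q' = (q₀ + (pure 1 : Beta)) + p := by rw [hq'def, add_assoc]
    rw [this]
    exact hL.2.2 _ p hp
  have hrange := range_eq_of_minimal hL hmin hq'
  have hpmem : p ∈ Set.range (· + q') := by rw [hrange]; exact hp
  obtain ⟨r, hr⟩ := hpmem
  have hPmem : P ∈ r + q' := by rw [show r + q' = p from hr]; exact hP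
  rw [mem_add] at hPmem
  obtain ⟨a, ha⟩ := Ultrafilter.nonempty_of_mem hPmem
  have ha' : {b | a + b ∈ P} ∈ q' := ha
  rw [hq'def, mem_add] at ha'
  have hG : {b : ℕ | b + (a + 1) ∈ Pstar} ∈ q₀ := by
    apply Filter.mem_of_superset ha'
    intro b hb
    have hb' : {c | b + c ∈ {b' | a + b' ∈ P}} ∈ (pure 1 : Beta) + p := hb
    rw [mem_pure_add] at hb'
    show {m | m + (b + (a+1)) ∈ P} ∈ p
    have : {c : ℕ | 1 + c ∈ {c' | b + c' ∈ {b' | a + b' ∈ P}}} =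
        {m : ℕ | m + (b + (a+1)) ∈ P} := by
      ext c
      show a + (b + (1 + c)) ∈ P ↔ c + (b + (a + 1)) ∈ P
      rw [show a + (b + (1 + c)) = c + (b + (a + 1)) by omega]
    rwa [this] at hb'
  have hDa := hD (a + 1)
  have hint := Filter.inter_mem hG hDa
  obtain ⟨b, hb1, hb2⟩ := Ultrafilter.nonempty_of_mem hint
  exact hb2 (a+1) (by omega) le_rfl hb1

lemma exists_ultrafilter_forall_mem {L : Set Beta} (hL : IsLI L)
    {B : ℕ → Set ℕ} (hmono : ∀ k l, k ≤ l → B l ⊆ B k)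
    (hsynd : ∀ k, Syndetic (B k)) : ∃ p ∈ L, ∀ k, B k ∈ p := by
  have hne : ∀ k, (L ∩ {p : Beta | B k ∈ p}).Nonempty := by
    intro k
    obtain ⟨p, hp, hBp⟩ := exists_mem_of_syndetic hL (hsynd k)
    exact ⟨p, hp, hBp⟩
  have hcl : ∀ k : ℕ, IsClosed (L ∩ {p : Beta | B k ∈ p}) :=
    fun k => hL.2.1.inter (ultrafilter_isClosed_basic _)
  have hdir : Directed (· ⊇ ·) (fun k => L ∩ {p : Beta | B k ∈ p}) := by
    intro k l
    refine ⟨max k l, ?_, ?_⟩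
    · exact Set.inter_subset_inter_right _ fun p hp =>
        Filter.mem_of_superset hp (hmono k _ (le_max_left k l))
    · exact Set.inter_subset_inter_right _ fun p hp =>
        Filter.mem_of_superset hp (hmono l _ (le_max_right k l))
  have := IsCompact.nonempty_iInter_of_directed_nonempty_isCompact_isClosed
    _ hdir hne (fun k => (hcl k).isCompact) hcl
  obtain ⟨p, hp⟩ := this
  rw [Set.mem_iInter] at hp
  exact ⟨p, (hp 0).1, fun k => (hp k).2⟩

/-! ### Symbolic dynamics -/

/-- the shift map on `ℕ → Bool` -/
def shift : (ℕ → Bool) → (ℕ → Bool) := fun y n => y (n + 1)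

lemma continuous_shift : Continuous shift :=
  continuous_pi fun j => continuous_apply (j + 1)

lemma shift_iterate (n : ℕ) (y : ℕ → Bool) (j : ℕ) : shift^[n] y j = y (j + n) := by
  induction n generalizing y j with
  | zero => rfl
  | succ n ih =>
    rw [Function.iterate_succ_apply, ih]
    rfl

lemma mem_closure_of_approx {x : ℕ → Bool} {T : Set (ℕ → Bool)}
    (h : ∀ k, ∃ z ∈ T, ∀ j ≤ k, z j = x j) : x ∈ closure T := by
  choose z hzT hz using h
  have htend : Filter.Tendsto z Filter.atTop (nhds x) := by
    rw [tendsto_pi_nhds]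
    intro j
    apply Filter.Tendsto.congr' _ tendsto_const_nhds
    filter_upwards [Filter.Ici_mem_atTop j] with k hk
    exact (hz k j hk).symm
  exact mem_closure_of_tendsto htend (Filter.Eventually.of_forall hzT)

lemma approx_of_mem_closure {y : ℕ → Bool} {T : Set (ℕ → Bool)}
    (h : y ∈ closure T) (k : ℕ) : ∃ z ∈ T, ∀ j ≤ k, z j = y j := by
  have hO : IsOpen {z : ℕ → Bool | ∀ j ≤ k, z j = y j} := by
    have : {z : ℕ → Bool | ∀ j ≤ k, z j = y j} =
        ⋂ j ∈ Finset.range (k + 1), (fun z : ℕ → Bool => z j) ⁻¹' {y j} := by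
      ext z
      simp only [Set.mem_setOf_eq, Set.mem_iInter, Set.mem_preimage, Set.mem_singleton_iff,
        Finset.mem_range]
      constructor
      · intro hz j hj; exact hz j (by omega)
      · intro hz j hj; exact hz j (by omega)
    rw [this]
    exact isOpen_biInter_finset fun j _ =>
      (continuous_apply j).isOpen_preimage _ (isOpen_discrete _)
  obtain ⟨z, hz1, hz2⟩ := mem_closure_iff.mp h _ hO (fun j _ => rfl)
  exact ⟨z, hz2, hz1⟩

/-- From a uniformly recurrent "bad" point we get non-recurrence. -/
lemma not_pointwiseRecurrent (A : Set ℕ) (x : ℕ → Bool)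
    (hx0 : x 0 = true) (hxA : ∀ n ∈ A, 0 < n → x n = false)
    (hUR : ∀ k, Syndetic {n | 0 < n ∧ ∀ j ≤ k, x (n + j) = x j}) :
    ¬ PointwiseRecurrent A := by
  intro hrec
  classical
  set M : Set (ℕ → Bool) := closure (Set.range fun n => shift^[n] x) with hMdef
  have hxM : x ∈ M := subset_closure ⟨0, rfl⟩
  have hMinv : ∀ z ∈ M, shift z ∈ M := by
    intro z hz
    have h1 : shift z ∈ closure (shift '' Set.range fun n => shift^[n] x) :=
      image_closure_subset_closure_image continuous_shift ⟨z, hz, rfl⟩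
    refine closure_mono ?_ h1
    rintro _ ⟨_, ⟨n, rfl⟩, rfl⟩
    exact ⟨n + 1, Function.iterate_succ_apply' shift n x⟩
  -- every point of M comes syndetically back to agree with x
  have hkey : ∀ y ∈ M, ∀ k : ℕ, ∃ n : ℕ, 1 ≤ n ∧ ∀ j ≤ k, shift^[n] y j = x j := by
    intro y hy k
    obtain ⟨N, hN, hsyn⟩ := hUR k
    obtain ⟨z, ⟨m, rfl⟩, hzy⟩ := approx_of_mem_closure hy (N + 1 + k)
    obtain ⟨i, hi1, hi2, hi3⟩ := hsyn (m + 1) (by omega)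
    refine ⟨1 + i, by omega, ?_⟩
    intro j hj
    rw [shift_iterate]
    have h1 : y (j + (1 + i)) = shift^[m] x (j + (1 + i)) :=
      (hzy (j + (1 + i)) (by omega)).symm
    rw [h1, shift_iterate]
    have h2 := hi3.2 j hj
    rw [show j + (1 + i) + m = m + 1 + i + j by omega]
    exact h2
  -- hence x is in the closure of every positive orbit of every point of M
  have hdense : ∀ y ∈ M, ∀ w ∈ M,
      w ∈ closure {z : ℕ → Bool | ∃ n : ℕ, 0 < n ∧ shift^[n] y = z} := by
    intro y hy w hw
    set C : Set (ℕ → Bool) := closure {z : ℕ → Bool | ∃ n : ℕ, 0 < n ∧ shift^[n] y = z}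
      with hCdef
    have hxC : x ∈ C := by
      apply mem_closure_of_approx
      intro k
      obtain ⟨n, hn1, hn2⟩ := hkey y hy k
      exact ⟨shift^[n] y, ⟨n, hn1, rfl⟩, hn2⟩
    have hCinv : ∀ z ∈ C, shift z ∈ C := by
      intro z hz
      have h1 : shift z ∈ closure (shift '' {z : ℕ → Bool | ∃ n, 0 < n ∧ shift^[n] y = z}) :=
        image_closure_subset_closure_image continuous_shift ⟨z, hz, rfl⟩
      refine closure_mono ?_ h1
      rintro _ ⟨_, ⟨n, hn, rfl⟩, rfl⟩
      exact ⟨n + 1, by omega, Function.iterate_succ_apply' shift n y⟩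
    have horb : ∀ n : ℕ, shift^[n] x ∈ C := by
      intro n
      induction n with
      | zero => exact hxC
      | succ n ih => rw [Function.iterate_succ_apply']; exact hCinv _ ih
    have : M ⊆ C := by
      rw [hMdef]
      apply closure_minimal _ isClosed_closure
      rintro _ ⟨n, rfl⟩
      exact horb n
    exact this hw
  -- build the system
  haveI : CompactSpace ↥M := isCompact_iff_compactSpace.mp
    (isClosed_closure.isCompact)
  haveI : Nonempty ↥M := ⟨⟨x, hxM⟩⟩
  letI mM : MetricSpace ↥M := TopologicalSpace.metrizableSpaceMetric ↥M
  set Φ : ↥M → ↥M := fun z => ⟨shift z.1, hMinv z.1 z.2⟩ with hΦdef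
  have hΦcont : Continuous Φ :=
    (continuous_shift.comp continuous_subtype_val).subtype_mk _
  have hΦiter : ∀ (n : ℕ) (z : ↥M), (Φ^[n] z).1 = shift^[n] z.1 := by
    intro n
    induction n with
    | zero => intro z; rfl
    | succ n ih =>
      intro z
      rw [Function.iterate_succ_apply', Function.iterate_succ_apply', ← ih z]
  set Sys : MetricDynSystem := ⟨↥M, Φ, hΦcont⟩ with hSysdef
  have hmin : Sys.Minimal := by
    intro y
    intro w
    rw [closure_subtype]
    have : Subtype.val '' {z : Sys.carrier | ∃ n : ℕ, 0 < n ∧ Sys.map^[n] y = z} =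
        {z : ℕ → Bool | ∃ n : ℕ, 0 < n ∧ shift^[n] (y : ℕ → Bool) = z} := by
      ext z
      constructor
      · rintro ⟨w', ⟨n, hn, rfl⟩, rfl⟩
        exact ⟨n, hn, (hΦiter n y).symm⟩
      · rintro ⟨n, hn, rfl⟩
        exact ⟨Φ^[n] y, ⟨n, hn, rfl⟩, hΦiter n y⟩
    rw [this]
    exact hdense y.1 y.2 w.1 w.2
  have hUopen : IsOpen {w : Sys.carrier | (w : ℕ → Bool) 0 = true} := by
    have : Continuous fun w : Sys.carrier => (w : ℕ → Bool) 0 :=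
      (continuous_apply 0).comp continuous_subtype_val
    exact this.isOpen_preimage {true} (isOpen_discrete _)
  obtain ⟨n, hnA, hn0, hnU⟩ := hrec Sys hmin ⟨x, hxM⟩ _ hUopen hx0
  have h1 : (Φ^[n] ⟨x, hxM⟩ : ℕ → Bool) 0 = true := hnU
  rw [hΦiter n ⟨x, hxM⟩, shift_iterate] at h1
  have h2 : x n = true := by simpa using h1
  rw [hxA n hnA hn0] at h2
  exact Bool.false_ne_true h2

lemma syndetic_mono {S₁ S₂ : Set ℕ} (h : S₁ ⊆ S₂) (hs : Syndetic S₁) : Syndetic S₂ := by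
  obtain ⟨N, hN, hsyn⟩ := hs
  exact ⟨N, hN, fun m hm => by
    obtain ⟨i, h1, h2, h3⟩ := hsyn m hm
    exact ⟨i, h1, h2, h h3⟩⟩

/-- In a minimal system, return times of any point to any ball around it are syndetic. -/
lemma syndetic_return (Sys : MetricDynSystem) (hmin : Sys.Minimal) (x : Sys.carrier)
    {δ : ℝ} (hδ : 0 < δ) :
    Syndetic {n | 0 < n ∧ dist (Sys.map^[n] x) x < δ} := by
  set B : Set Sys.carrier := Metric.ball x δ with hBdef
  have hBopen : IsOpen B := Metric.isOpen_ball
  have hBne : B.Nonempty := ⟨x, Metric.mem_ball_self hδ⟩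
  have hcover : (Set.univ : Set Sys.carrier) ⊆ ⋃ n : ℕ, Sys.map^[n + 1] ⁻¹' B := by
    intro y _
    obtain ⟨z, ⟨n, hn, rfl⟩, hzB⟩ := (hmin y).exists_mem_open hBopen hBne
    refine Set.mem_iUnion.mpr ⟨n - 1, ?_⟩
    show Sys.map^[n - 1 + 1] y ∈ B
    rw [show n - 1 + 1 = n by omega]
    exact hzB
  obtain ⟨t, ht⟩ := isCompact_univ.elim_finite_subcover _
    (fun n : ℕ => (Sys.continuous_map.iterate (n + 1)).isOpen_preimage _ hBopen) hcover
  refine ⟨t.sup id + 1, by omega, ?_⟩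
  intro m _
  obtain ⟨n, hnt, hny⟩ := Set.mem_iUnion₂.mp (ht (Set.mem_univ (Sys.map^[m] x)))
  refine ⟨n + 1, by omega, by
    have := Finset.le_sup (f := id) hnt
    simp only [id] at this
    omega, ?_⟩
  have heq : Sys.map^[n + 1] (Sys.map^[m] x) = Sys.map^[m + (n + 1)] x := by
    rw [show m + (n + 1) = (n + 1) + m by omega]
    exact (Function.iterate_add_apply Sys.map (n + 1) m x).symm
  refine ⟨by omega, ?_⟩
  rw [← heq]
  exact Metric.mem_ball.mp hny

end PWRAux

open PWRAux

theorem pointwiseRecurrent_iff_syndetic_characterization (A : Set ℕ) :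
    PointwiseRecurrent A ↔
      ∀ S : Set ℕ, Syndetic S →
        ∃ F : Finset ℕ, (F : Set ℕ) ⊆ A ∧
          ∀ S' : Set ℕ, S' ⊆ S → Syndetic S' →
            ((F : Set ℕ) ∩ ⋃ s' ∈ S', NSub S s').Nonempty := by
  constructor
  · -- forward: pointwise recurrent → combinatorial characterization
    intro hrec
    by_contra hR
    push_neg at hR
    obtain ⟨S, hSsyn, hbad⟩ := hR
    classical
    -- each B k is syndetic
    set B : ℕ → Set ℕ := fun k =>
      {m | m ∈ S ∧ ∀ n, n ∈ A → 0 < n → n ≤ k → m + n ∉ S} with hBdef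
    have hBmono : ∀ k l, k ≤ l → B l ⊆ B k := by
      intro k l hkl m hm
      exact ⟨hm.1, fun n h1 h2 h3 => hm.2 n h1 h2 (h3.trans hkl)⟩
    have hBsyn : ∀ k, Syndetic (B k) := by
      intro k
      set F : Finset ℕ := (Finset.Icc 1 k).filter (fun n => n ∈ A) with hFdef
      have hFA : (F : Set ℕ) ⊆ A := by
        intro n hn
        simp only [hFdef, Finset.coe_filter, Set.mem_setOf_eq] at hn
        exact hn.2
      obtain ⟨S', hS'S, hS'syn, hS'empty⟩ := hbad F hFA
      refine syndetic_mono ?_ hS'syn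
      intro m hm
      refine ⟨hS'S hm, fun n h1 h2 h3 hmn => ?_⟩
      have hnF : n ∈ (F : Set ℕ) := by
        simp only [hFdef, Finset.coe_filter, Set.mem_setOf_eq, Finset.mem_Icc]
        exact ⟨⟨h2, h3⟩, h1⟩
      have : n ∈ (F : Set ℕ) ∩ ⋃ s' ∈ S', NSub S s' :=
        ⟨hnF, Set.mem_biUnion hm ⟨h2, by rwa [Nat.add_comm]⟩⟩
      rw [hS'empty] at this
      exact this
    -- get a minimal left ideal and an ultrafilter containing all B k
    obtain ⟨L, hL, hLmin⟩ := exists_minimal_LI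
    obtain ⟨p, hpL, hp⟩ := exists_ultrafilter_forall_mem hL hBmono hBsyn
    -- build the bad point
    set x : ℕ → Bool := fun j => if {m | m + j ∈ S} ∈ p then true else false with hxdef
    have hx : ∀ j, x j = true ↔ {m | m + j ∈ S} ∈ p := by
      intro j
      by_cases h : {m | m + j ∈ S} ∈ p <;> simp [hxdef, h]
    have hx0 : x 0 = true := by
      rw [hx]
      exact Filter.mem_of_superset (hp 0) (fun m hm => hm.1)
    have hxA : ∀ n ∈ A, 0 < n → x n = false := by
      intro n hnA hn0
      have hnot : ¬ ({m | m + n ∈ S} ∈ p) := by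
        intro hmem
        obtain ⟨m, hm1, hm2⟩ := Ultrafilter.nonempty_of_mem (Filter.inter_mem (hp n) hmem)
        exact hm1.2 n hnA hn0 le_rfl hm2
      revert hnot
      rw [← hx n]
      cases x n <;> simp
    have hUR : ∀ k, Syndetic {n | 0 < n ∧ ∀ j ≤ k, x (n + j) = x j} := by
      intro k
      set P : Set ℕ := {m | ∀ j ≤ k, (m + j ∈ S ↔ x j = true)} with hPdef
      have hPj : ∀ j, {m | m + j ∈ S ↔ x j = true} ∈ p := by
        intro j
        by_cases hj : x j = true
        · exact Filter.mem_of_superset ((hx j).mp hj)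
            (fun m hm => ⟨fun _ => hj, fun _ => hm⟩)
        · have h1 : {m | m + j ∈ S}ᶜ ∈ p :=
            Ultrafilter.compl_mem_iff_notMem.mpr (fun h => hj ((hx j).mpr h))
          exact Filter.mem_of_superset h1
            (fun m hm => ⟨fun h => absurd h hm, fun h => absurd h hj⟩)
      have hPmem : P ∈ p := by
        have h1 : (⋂ j ∈ Finset.range (k + 1), {m | m + j ∈ S ↔ x j = true}) ∈ p :=
          (Filter.biInter_finset_mem _).mpr fun j _ => hPj j
        refine Filter.mem_of_superset h1 ?_
        intro m hm
        rw [Set.mem_iInter₂] at hm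
        exact fun j hj => hm j (Finset.mem_range.mpr (by omega))
      have hstar := syndetic_pstar hL hLmin hpL hPmem
      obtain ⟨N, hN, hsyn⟩ := hstar
      refine ⟨N, hN, ?_⟩
      intro m hm
      obtain ⟨i, h1, h2, h3⟩ := hsyn m hm
      refine ⟨i, h1, h2, by omega, ?_⟩
      set n : ℕ := m + i with hndef
      have hQ : {m' | m' + n ∈ P} ∈ p := h3
      intro j hj
      by_cases hjt : x j = true
      · rw [hjt, hx]
        refine Filter.mem_of_superset hQ ?_
        intro m' hm'
        have := (hm' j hj).mpr hjt
        show m' + (n + j) ∈ S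
        rwa [← Nat.add_assoc]
      · have hjf : x j = false := by revert hjt; cases x j <;> simp
        have hnot : ¬ ({m' | m' + (n + j) ∈ S} ∈ p) := by
          intro hmem
          obtain ⟨m', hm'1, hm'2⟩ :=
            Ultrafilter.nonempty_of_mem (Filter.inter_mem hQ hmem)
          have : m' + n + j ∈ S := by rwa [Nat.add_assoc]
          exact hjt ((hm'1 j hj).mp this)
        have : x (n + j) ≠ true := fun h => hnot ((hx _).mp h)
        rw [hjf]
        revert this
        cases x (n + j) <;> simp
    exact absurd hrec (not_pointwiseRecurrent A x hx0 hxA hUR)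
  · -- backward: combinatorial characterization → pointwise recurrent
    intro H Sys hmin x U hU hxU
    obtain ⟨ε, hε, hball⟩ := Metric.isOpen_iff.mp hU x hxU
    have hε2 : (0:ℝ) < ε / 2 := by linarith
    set S : Set ℕ := {n | 0 < n ∧ dist (Sys.map^[n] x) x < ε / 2} with hSdef
    obtain ⟨F, hFA, hF⟩ := H S (syndetic_return Sys hmin x hε2)
    -- uniform continuity over the finite set F
    have hδ : ∀ G : Finset ℕ, ∃ δ : ℝ, 0 < δ ∧ ∀ n ∈ G, ∀ y : Sys.carrier,
        dist y x < δ → dist (Sys.map^[n] y) (Sys.map^[n] x) < ε / 2 := by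
      intro G
      induction G using Finset.induction with
      | empty => exact ⟨1, one_pos, fun n hn => absurd hn (Finset.notMem_empty n)⟩
      | @insert a G' ha ih =>
        obtain ⟨δ₁, hδ₁, h₁⟩ := ih
        obtain ⟨δ₂, hδ₂, h₂⟩ := Metric.continuousAt_iff.mp
          ((Sys.continuous_map.iterate a).continuousAt) (ε / 2) hε2
        refine ⟨min δ₁ δ₂, lt_min hδ₁ hδ₂, ?_⟩
        intro n hn y hy
        rcases Finset.mem_insert.mp hn with rfl | hn'
        · exact h₂ (hy.trans_le (min_le_right _ _))
        · exact h₁ n hn' y (hy.trans_le (min_le_left _ _))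
    obtain ⟨δ, hδ0, hδF⟩ := hδ F
    set δ' : ℝ := min δ (ε / 2) with hδ'def
    have hδ'0 : 0 < δ' := lt_min hδ0 hε2
    set S' : Set ℕ := {n | 0 < n ∧ dist (Sys.map^[n] x) x < δ'} with hS'def
    have hS'S : S' ⊆ S := fun n hn =>
      ⟨hn.1, hn.2.trans_le (min_le_right _ _)⟩
    obtain ⟨n, hnF, hnmem⟩ := hF S' hS'S (syndetic_return Sys hmin x hδ'0)
    obtain ⟨s', hs'S', hns'⟩ := Set.mem_iUnion₂.mp hnmem
    obtain ⟨hn0, hnsS⟩ := hns'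
    refine ⟨n, hFA hnF, hn0, ?_⟩
    apply hball
    rw [Metric.mem_ball]
    have h1 : dist (Sys.map^[n + s'] x) x < ε / 2 := hnsS.2
    have h2 : dist (Sys.map^[s'] x) x < δ :=
      (hs'S'.2).trans_le (min_le_left _ _)
    have h3 : dist (Sys.map^[n] (Sys.map^[s'] x)) (Sys.map^[n] x) < ε / 2 :=
      hδF n hnF _ h2
    have h4 : Sys.map^[n] (Sys.map^[s'] x) = Sys.map^[n + s'] x :=
      (Function.iterate_add_apply _ n s' x).symm
    rw [h4] at h3
    calc dist (Sys.map^[n] x) x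
        ≤ dist (Sys.map^[n] x) (Sys.map^[n + s'] x) + dist (Sys.map^[n + s'] x) x :=
          dist_triangle _ _ _
      _ < ε / 2 + ε / 2 := by rw [dist_comm] at h3; exact add_lt_add h3 h1
      _ = ε := by ring
end

section
/- A set A ⊆ ℕ is dynamically thick if and only if for every piecewise syndetic set S ⊆ ℕ there exists a finite set F ⊆ A such that the set S − F is thick. -/
/-- `S ⊆ ℕ` is thick if every finite subset of `ℕ` has a translate inside `S`. -/
def Thick (S : Set ℕ) : Prop :=
  ∀ F : Finset ℕ, ∃ n : ℕ, 0 < n ∧ ∀ f ∈ F, f + n ∈ S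

/-- `S ⊆ ℕ` is piecewise syndetic if `⋃_{i=1}^{N} (S - i)` is thick for some `N ≥ 1`. -/
def PiecewiseSyndetic (S : Set ℕ) : Prop :=
  ∃ N : ℕ, 0 < N ∧ Thick (⋃ i ∈ Finset.Icc 1 N, NSub S i)

/-- `A` is dynamically thick: for every minimal system, every point `x` and every
nonempty open `U`, some `n ∈ A` has `T^n x ∈ U`. -/
def DynThick (A : Set ℕ) : Prop :=
  ∀ S : MetricDynSystem, S.Minimal →
    ∀ (x : S.carrier) (U : Set S.carrier), IsOpen U → U.Nonempty →
      ∃ n ∈ A, 0 < n ∧ S.map^[n] x ∈ U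

/-!
Forward direction: encode `S` as a point `w` of `{0,1}^ℕ` under the shift. Piecewise
syndeticity of `S` yields a point in the orbit closure of `w` whose windows of length `N` all
contain a `1`; these points form a closed invariant set, so it contains a minimal subsystem `M`
that avoids the zero sequence. Dynamical thickness applied to the cylinder `{x | x 0 = 1}`,
together with compactness of `M`, gives a finite `F ⊆ A` such that every point of `M` has a `1`
at some position in `F`; transporting this back to `w` along its orbit shows that `S - F` is
thick.

Reverse direction: in a minimal system the return times of `x` to a nonempty open set `V` have
bounded gaps, so `S - F` is thick for their set `S` and some finite `F ⊆ A`. The closed set of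
points entering `C ⊇ V` at a time in `F` is then visited along a thick set of times, which in a
minimal system forces it to be everything; hence `T^f x ∈ C` for some `f ∈ F`. Taking `C ⊆ U`
closed and missing `x` makes `f` positive. When `U = {x}`, the point `x` is periodic, and applying
the hypothesis to the multiples of twice the period puts an odd multiple of the period in `A`.
-/

open Set Filter Topology TopologicalSpace

theorem Thick.mono {S S' : Set ℕ} (hSS' : S ⊆ S') (hS : Thick S) : Thick S' := fun G =>
  (hS G).imp fun _ ⟨hn, hG⟩ => ⟨hn, fun g hg => hSS' (hG g hg)⟩

theorem nSub_mono {S S' : Set ℕ} (hSS' : S ⊆ S') (n : ℕ) : NSub S n ⊆ NSub S' n :=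
  fun _ ⟨hm, hmS⟩ => ⟨hm, hSS' hmS⟩

theorem piecewiseSyndetic_of_forall_exists_add_mem {S : Set ℕ} {N : ℕ}
    (hS : ∀ m, ∃ i ∈ Finset.Icc 1 N, m + i ∈ S) : PiecewiseSyndetic S := by
  obtain ⟨i, hi, -⟩ := hS 0
  refine ⟨N, (Finset.mem_Icc.1 hi).1.trans (Finset.mem_Icc.1 hi).2,
    fun _ => ⟨1, one_pos, fun g _ => ?_⟩⟩
  obtain ⟨i, hi, hgi⟩ := hS (g + 1)
  exact mem_iUnion₂.2 ⟨i, hi, g.succ_pos, hgi⟩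

theorem exists_mem_Icc_dvd_add {q : ℕ} (hq : 0 < q) (m : ℕ) :
    ∃ i ∈ Finset.Icc 1 q, q ∣ m + i := by
  have := Nat.div_add_mod m q
  have := Nat.mod_lt m hq
  exact ⟨q - m % q, Finset.mem_Icc.2 ⟨by omega, by omega⟩, m / q + 1, by rw [mul_add]; omega⟩

section MinimalMap

variable {X : Type*} [TopologicalSpace X] {T : X → X}

theorem exists_isPeriodicPt_of_isOpen_singleton
    (hmin : ∀ x, Dense {y | ∃ n, 0 < n ∧ T^[n] x = y}) {x : X} (hx : IsOpen {x}) :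
    ∃ p, 0 < p ∧ Function.IsPeriodicPt T p x := by
  obtain ⟨_, ⟨p, hp, rfl⟩, hpx⟩ := (hmin x).exists_mem_open hx ⟨x, rfl⟩
  exact ⟨p, hp, hpx⟩

variable [CompactSpace X]

theorem exists_bound_forall_exists_iterate_mem (hT : Continuous T)
    (hmin : ∀ x, Dense {y | ∃ n, 0 < n ∧ T^[n] x = y}) {V : Set X} (hV : IsOpen V)
    (hVne : V.Nonempty) : ∃ N, ∀ y, ∃ i ∈ Finset.Icc 1 N, T^[i] y ∈ V := by
  have hcover : univ ⊆ ⋃ i ∈ Ioi 0, T^[i] ⁻¹' V := fun y _ => by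
    obtain ⟨_, ⟨i, hi, rfl⟩, hiV⟩ := (hmin y).exists_mem_open hV hVne
    exact mem_biUnion (mem_Ioi.2 hi) hiV
  obtain ⟨B, hB, hBfin, hBcover⟩ :=
    isCompact_univ.elim_finite_subcover_image (fun i _ => hV.preimage (hT.iterate i)) hcover
  obtain ⟨N, hN⟩ := hBfin.bddAbove
  refine ⟨N, fun y => ?_⟩
  obtain ⟨i, hiB, hiy⟩ := mem_iUnion₂.1 (hBcover (mem_univ y))
  exact ⟨i, Finset.mem_Icc.2 ⟨hB hiB, hN hiB⟩, hiy⟩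

theorem eq_univ_of_thick_iterate_mem (hT : Continuous T)
    (hmin : ∀ x, Dense {y | ∃ n, 0 < n ∧ T^[n] x = y}) {Y : Set X} (hY : IsClosed Y) {x : X}
    (hx : Thick {n | T^[n] x ∈ Y}) : Y = univ := by
  -- Otherwise every orbit visits the open set `Yᶜ` with bounded gaps.
  by_contra hne
  obtain ⟨N, hN⟩ := exists_bound_forall_exists_iterate_mem hT hmin hY.isOpen_compl
    (nonempty_compl.2 hne)
  obtain ⟨n, -, hn⟩ := hx (Finset.Icc 1 N)
  obtain ⟨i, hi, hiY⟩ := hN (T^[n] x)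
  exact hiY (Function.iterate_add_apply T i n x ▸ hn i hi)

theorem exists_mem_finset_iterate_mem (hT : Continuous T)
    (hmin : ∀ x, Dense {y | ∃ n, 0 < n ∧ T^[n] x = y}) {C : Set X} (hC : IsClosed C) {x : X}
    {F : Finset ℕ} (hF : Thick (⋃ f ∈ F, NSub {n | T^[n] x ∈ C} f)) :
    ∃ f ∈ F, T^[f] x ∈ C := by
  set Y := ⋃ f ∈ F, T^[f] ⁻¹' C
  have hY : IsClosed Y := F.finite_toSet.isClosed_biUnion fun f _ => hC.preimage (hT.iterate f)
  have hvisit : Thick {n | T^[n] x ∈ Y} := hF.mono <| iUnion₂_subset fun f hf m hm =>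
    mem_biUnion hf (by rw [mem_preimage, ← Function.iterate_add_apply, add_comm]; exact hm.2)
  have hxY : x ∈ Y := eq_univ_of_thick_iterate_mem hT hmin hY hvisit ▸ mem_univ x
  simpa [Y] using hxY

end MinimalMap

theorem exists_pos_dvd_mem_of_forall_piecewiseSyndetic {A : Set ℕ}
    (hA : ∀ S : Set ℕ, PiecewiseSyndetic S →
      ∃ F : Finset ℕ, (F : Set ℕ) ⊆ A ∧ Thick (⋃ f ∈ F, NSub S f))
    {p : ℕ} (hp : 0 < p) : ∃ f ∈ A, 0 < f ∧ p ∣ f := by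
  have hq : 0 < 2 * p := by omega
  obtain ⟨F, hFA, hF⟩ :=
    hA {n | 2 * p ∣ n} (piecewiseSyndetic_of_forall_exists_add_mem (exists_mem_Icc_dvd_add hq))
  obtain ⟨n, -, hn⟩ := hF (Finset.Icc 1 (2 * p))
  obtain ⟨i, hi, hip⟩ := exists_mem_Icc_dvd_add hq (n + p)
  obtain ⟨f, hfF, -, hf⟩ := mem_iUnion₂.1 (hn i hi)
  -- `2p` divides both `(i + n) + f` and `(i + n) + p`, so `f` is an odd multiple of `p`
  have hfp : f ≡ p [MOD 2 * p] := by
    refine Nat.ModEq.add_left_cancel' (i + n) ?_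
    refine (Nat.modEq_zero_iff_dvd.2 hf).trans (Nat.modEq_zero_iff_dvd.2 ?_).symm
    rwa [show i + n + p = n + p + i by omega]
  refine ⟨f, hFA hfF, Nat.pos_of_ne_zero ?_, ?_⟩
  · rintro rfl
    have := Nat.le_of_dvd hp (Nat.modEq_zero_iff_dvd.1 hfp.symm)
    omega
  · exact Nat.modEq_zero_iff_dvd.1 ((hfp.of_mul_left 2).trans (Nat.modEq_zero_iff_dvd.2 dvd_rfl))

theorem exists_mem_iterate_mem_of_forall_piecewiseSyndetic {X : Type*} [TopologicalSpace X]
    [CompactSpace X] [T3Space X] {T : X → X} (hT : Continuous T)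
    (hmin : ∀ x, Dense {y | ∃ n, 0 < n ∧ T^[n] x = y}) {A : Set ℕ}
    (hA : ∀ S : Set ℕ, PiecewiseSyndetic S →
      ∃ F : Finset ℕ, (F : Set ℕ) ⊆ A ∧ Thick (⋃ f ∈ F, NSub S f))
    (x : X) {U : Set X} (hU : IsOpen U) (hUne : U.Nonempty) : ∃ n ∈ A, 0 < n ∧ T^[n] x ∈ U := by
  by_cases hUx : U ⊆ {x}
  · obtain rfl := hUne.subset_singleton_iff.1 hUx
    obtain ⟨p, hp, hpx⟩ := exists_isPeriodicPt_of_isOpen_singleton hmin hU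
    obtain ⟨f, hfA, hf, hpf⟩ := exists_pos_dvd_mem_of_forall_piecewiseSyndetic hA hp
    exact ⟨f, hfA, hf, hpx.trans_dvd hpf⟩
  -- Shrink `U` to a closed neighbourhood `C` that misses `x`, so a return time to `C` is positive.
  obtain ⟨u, huU, hux⟩ := not_subset.1 hUx
  obtain ⟨C, hCu, hC, hCU⟩ :=
    exists_mem_nhds_isClosed_subset ((hU.sdiff isClosed_singleton).mem_nhds ⟨huU, hux⟩)
  obtain ⟨N, hN⟩ := exists_bound_forall_exists_iterate_mem hT hmin isOpen_interior
    ⟨u, mem_interior_iff_mem_nhds.2 hCu⟩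
  obtain ⟨F, hFA, hF⟩ := hA {n | T^[n] x ∈ interior C} <|
    piecewiseSyndetic_of_forall_exists_add_mem fun m => by
      simpa only [mem_ofPred_eq, add_comm m, Function.iterate_add_apply] using hN (T^[m] x)
  obtain ⟨f, hfF, hfC⟩ := exists_mem_finset_iterate_mem hT hmin hC
    (hF.mono (iUnion₂_mono fun f _ => nSub_mono (fun _ => @interior_subset _ _ C _) f))
  refine ⟨f, hFA hfF, Nat.pos_of_ne_zero ?_, (hCU hfC).1⟩
  rintro rfl
  exact (hCU hfC).2 rfl

theorem exists_minimal_invariant_subset {X : Type*} [TopologicalSpace X] [CompactSpace X]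
    {T : X → X} (hT : Continuous T) {M₀ : Set X} (hM₀ : IsClosed M₀) (hne : M₀.Nonempty)
    (hM₀T : MapsTo T M₀ M₀) :
    ∃ M ⊆ M₀, M.Nonempty ∧ IsClosed M ∧ MapsTo T M M ∧
      ∀ x ∈ M, closure {y | ∃ n, 0 < n ∧ T^[n] x = y} = M := by
  let 𝒞 : Set (Set X) := {C | C.Nonempty ∧ IsClosed C ∧ MapsTo T C C}
  have hchain : ∀ c ⊆ 𝒞, IsChain (· ⊆ ·) c → c.Nonempty → ∃ lb ∈ 𝒞, ∀ s ∈ c, lb ⊆ s := by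
    intro c hc𝒞 hc hcne
    have : Nonempty c := hcne.to_subtype
    refine ⟨⋂₀ c, ⟨?_, isClosed_sInter fun C hC => (hc𝒞 hC).2.1,
      fun y hy C hC => (hc𝒞 hC).2.2 (hy C hC)⟩, fun _ => sInter_subset_of_mem⟩
    exact IsCompact.nonempty_sInter_of_directed_nonempty_isCompact_isClosed
      (fun s hs t ht => (hc.total hs ht).elim (fun h => ⟨s, hs, subset_rfl, h⟩)
        fun h => ⟨t, ht, h, subset_rfl⟩)
      (fun C hC => (hc𝒞 hC).1) (fun C hC => (hc𝒞 hC).2.1.isCompact) fun C hC => (hc𝒞 hC).2.1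
  obtain ⟨M, hMM₀, hMmin⟩ := zorn_superset_nonempty 𝒞 hchain M₀ ⟨hne, hM₀, hM₀T⟩
  obtain ⟨hMne, hM, hMT⟩ := hMmin.prop
  refine ⟨M, hMM₀, hMne, hM, hMT, fun x hx => ?_⟩
  set O := {y | ∃ n, 0 < n ∧ T^[n] x = y}
  have hOM : closure O ⊆ M := closure_minimal (fun _ ⟨n, _, hn⟩ => hn ▸ hMT.iterate n hx) hM
  have hOT : MapsTo T O O := fun _ ⟨n, _, hn⟩ =>
    ⟨n + 1, n.succ_pos, by rw [Function.iterate_succ_apply', hn]⟩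
  have hO𝒞 : closure O ∈ 𝒞 :=
    ⟨⟨T x, subset_closure ⟨1, one_pos, rfl⟩⟩, isClosed_closure, hOT.closure hT⟩
  exact hOM.antisymm (hMmin.le_of_le hO𝒞 hOM)

theorem DynThick.exists_finset_forall_iterate_mem {A : Set ℕ} (hA : DynThick A) {X : Type}
    [TopologicalSpace X] [MetrizableSpace X] {T : X → X} (hT : Continuous T) {M : Set X}
    (hM : IsCompact M) (hMT : MapsTo T M M)
    (hmin : ∀ x ∈ M, closure {y | ∃ n, 0 < n ∧ T^[n] x = y} = M) {U : Set X} (hU : IsOpen U)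
    (hMU : (M ∩ U).Nonempty) : ∃ F : Finset ℕ, ↑F ⊆ A ∧ ∀ x ∈ M, ∃ f ∈ F, T^[f] x ∈ U := by
  have hcover : M ⊆ ⋃ n ∈ A, T^[n] ⁻¹' U := by
    intro x hx
    have : CompactSpace M := isCompact_iff_compactSpace.1 hM
    have : Nonempty M := ⟨⟨x, hx⟩⟩
    let _ : MetricSpace M := metrizableSpaceMetric M
    let Sys : MetricDynSystem := ⟨M, hMT.restrict _ _ _, hT.restrict hMT⟩
    have hSys : Sys.Minimal := fun p => by
      refine IsInducing.subtypeVal.dense_iff.2 fun q => ?_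
      have horbit : Subtype.val '' {q | ∃ n, 0 < n ∧ Sys.map^[n] p = q} =
          {y | ∃ n, 0 < n ∧ T^[n] p = y} := by
        ext y
        simp [Sys, MapsTo.iterate_restrict]
      rw [horbit, hmin p p.2]
      exact q.2
    obtain ⟨u, huM, huU⟩ := hMU
    obtain ⟨n, hnA, -, hn⟩ := hA Sys hSys ⟨x, hx⟩ (Subtype.val ⁻¹' U)
      (hU.preimage continuous_subtype_val) ⟨⟨u, huM⟩, huU⟩
    refine mem_biUnion hnA ?_
    simpa [Sys, MapsTo.iterate_restrict] using hn
  obtain ⟨B, hBA, hBfin, hB⟩ :=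
    hM.elim_finite_subcover_image (fun n _ => hU.preimage (hT.iterate n)) hcover
  exact ⟨hBfin.toFinset, by simpa using hBA, fun x hx => by simpa using hB hx⟩

def shift (x : ℕ → Bool) : ℕ → Bool := fun n => x (n + 1)

theorem continuous_shift : Continuous shift :=
  continuous_pi fun n => continuous_apply (n + 1)

theorem shift_iterate_apply (t : ℕ) (x : ℕ → Bool) (n : ℕ) : shift^[t] x n = x (n + t) := by
  induction t generalizing x with
  | zero => rfl
  | succ t ih => exact ih (shift x)

/-- Sequences in which every window `m + 1, …, m + N` contains a `true`. -/
def boundedGaps (N : ℕ) : Set (ℕ → Bool) :=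
  ⋂ m, shift^[m] ⁻¹' ⋃ i ∈ Finset.Icc 1 N, (· i) ⁻¹' {true}

theorem isClosed_preimage_iterate_shift (m N : ℕ) :
    IsClosed (shift^[m] ⁻¹' ⋃ i ∈ Finset.Icc 1 N, (· i) ⁻¹' {true}) :=
  (isClosed_biUnion_finset fun i _ => (isClosed_discrete _).preimage (continuous_apply i)).preimage
    (continuous_shift.iterate m)

theorem isClosed_boundedGaps (N : ℕ) : IsClosed (boundedGaps N) :=
  isClosed_iInter fun m => isClosed_preimage_iterate_shift m N

theorem mapsTo_shift_boundedGaps (N : ℕ) : MapsTo shift (boundedGaps N) (boundedGaps N) :=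
  fun _ hz => mem_iInter.2 fun m => by
    rw [mem_preimage, ← Function.iterate_succ_apply]
    exact mem_iInter.1 hz (m + 1)

section OrbitClosure

variable {w : ℕ → Bool}

theorem mapsTo_shift_closure_orbit :
    MapsTo shift (closure (range fun t => shift^[t] w)) (closure (range fun t => shift^[t] w)) :=
  MapsTo.closure (by rintro _ ⟨t, rfl⟩; exact ⟨t + 1, Function.iterate_succ_apply' _ t w⟩)
    continuous_shift

theorem exists_iterate_shift_eqOn_of_mem_closure {z : ℕ → Bool}
    (hz : z ∈ closure (range fun t => shift^[t] w)) (J : Finset ℕ) :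
    ∃ t, ∀ j ∈ J, w (j + t) = z j := by
  obtain ⟨_, hx, t, rfl⟩ := mem_closure_iff.1 hz (⋂ j ∈ J, (fun x => x j) ⁻¹' {z j})
    (isOpen_biInter_finset fun j _ => (isOpen_discrete _).preimage (continuous_apply j))
    (mem_iInter₂.2 fun _ _ => rfl)
  exact ⟨t, fun j hj => (shift_iterate_apply t w j).symm.trans (mem_iInter₂.1 hx j hj)⟩

theorem exists_mem_closure_orbit_boundedGaps {N : ℕ}
    (hw : Thick (⋃ i ∈ Finset.Icc 1 N, NSub {n | w n = true} i)) :
    ∃ z ∈ closure (range fun t => shift^[t] w), z ∈ boundedGaps N := by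
  choose n _ hn using fun L => hw (Finset.range (L + 1))
  obtain ⟨z, -, φ, hφ, hz⟩ :=
    isCompact_univ.tendsto_subseq (x := fun L => shift^[n L] w) fun _ => mem_univ _
  refine ⟨z, isClosed_closure.mem_of_tendsto hz (.of_forall fun L => subset_closure ⟨_, rfl⟩),
    mem_iInter.2 fun m => ?_⟩
  refine (isClosed_preimage_iterate_shift m N).mem_of_tendsto hz
    (eventually_atTop.2 ⟨m, fun L hL => ?_⟩)
  obtain ⟨i, hi, -, hin⟩ :=
    mem_iUnion₂.1 (hn (φ L) m (Finset.mem_range_succ_iff.2 (hL.trans hφ.le_apply)))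
  refine mem_biUnion hi ?_
  simpa [shift_iterate_apply, add_comm, add_left_comm] using hin

theorem thick_of_mem_closure_orbit {z : ℕ → Bool} (hz : z ∈ closure (range fun t => shift^[t] w))
    {F : Finset ℕ} (hF : ∀ m, ∃ f ∈ F, z (m + f) = true) :
    Thick (⋃ f ∈ F, NSub {n | w n = true} f) := by
  intro G
  choose f hfF hf using fun g => hF (g + 1)
  obtain ⟨t, ht⟩ := exists_iterate_shift_eqOn_of_mem_closure hz (G.image fun g => g + 1 + f g)
  refine ⟨t + 1, t.succ_pos, fun g hg => mem_biUnion (hfF g) ⟨by omega, ?_⟩⟩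
  change w (g + (t + 1) + f g) = true
  rw [show g + (t + 1) + f g = g + 1 + f g + t by ring, ht _ (Finset.mem_image_of_mem _ hg), hf g]

end OrbitClosure

theorem DynThick.exists_finset_thick {A : Set ℕ} (hA : DynThick A) {w : ℕ → Bool}
    (hw : PiecewiseSyndetic {n | w n = true}) :
    ∃ F : Finset ℕ, ↑F ⊆ A ∧ Thick (⋃ f ∈ F, NSub {n | w n = true} f) := by
  obtain ⟨N, -, hN⟩ := hw
  obtain ⟨z, hzK, hzW⟩ := exists_mem_closure_orbit_boundedGaps hN
  obtain ⟨M, hMKW, ⟨x, hx⟩, hM, hMT, hmin⟩ := exists_minimal_invariant_subset continuous_shift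
    (isClosed_closure.inter (isClosed_boundedGaps N)) ⟨z, hzK, hzW⟩
    (mapsTo_shift_closure_orbit.inter_inter (mapsTo_shift_boundedGaps N))
  have hMU : (M ∩ (· 0) ⁻¹' {true}).Nonempty := by
    obtain ⟨i, -, hi⟩ := mem_iUnion₂.1 (mem_iInter.1 (hMKW hx).2 0)
    exact ⟨shift^[i] x, hMT.iterate i hx, by rwa [mem_preimage, shift_iterate_apply, zero_add]⟩
  obtain ⟨F, hFA, hF⟩ := hA.exists_finset_forall_iterate_mem continuous_shift hM.isCompact hMT
    hmin ((isOpen_discrete {true}).preimage (continuous_apply 0)) hMU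
  refine ⟨F, hFA, thick_of_mem_closure_orbit (hMKW hx).1 fun m => ?_⟩
  obtain ⟨f, hfF, hf⟩ := hF _ (hMT.iterate m hx)
  rw [mem_preimage, shift_iterate_apply, shift_iterate_apply, zero_add, mem_singleton_iff] at hf
  exact ⟨f, hfF, add_comm m f ▸ hf⟩

theorem dynThick_iff_piecewiseSyndetic_characterization (A : Set ℕ) :
    DynThick A ↔
      ∀ S : Set ℕ, PiecewiseSyndetic S →
        ∃ F : Finset ℕ, (F : Set ℕ) ⊆ A ∧ Thick (⋃ f ∈ F, NSub S f) := by
  refine ⟨fun hA S hS => ?_, fun hA Sys hmin x U hU hUne => ?_⟩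
  · classical
    simpa using hA.exists_finset_thick (w := fun n => decide (n ∈ S)) (by simpa using hS)
  · exact exists_mem_iterate_mem_of_forall_piecewiseSyndetic Sys.continuous_map hmin hA x hU hUne
end

section
/- Let k ≥ 1 and let H_0, …, H_{k−1} ⊆ ℕ be thick sets. Then the set A := ⋃_{i=0}^{k−1} ({m ∈ ℕ : m ≡ i (mod k)} ∩ H_i) is dynamically thick. -/
/-!
Lift to the skew product `X × ℤ/k`, `(x, j) ↦ (T x, j + 1)`. Its orbit closures are minimal:
a closed invariant subset projects onto the minimal system `X`, and translations of the second
coordinate commute with the map. Choose `(u, j)` with `u ∈ U` in the orbit closure `W` of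
`(x, 0)`. By minimality and compactness of `W`, the times at which `(x, 0)` visits `U × {j}` are
syndetic, so one of them, `r`, lies in the thick set `H j`; and then `r ≡ j (mod k)`.
-/

open Set Function

section PosOrbit

variable {X Y : Type*}

def posOrbit (f : X → X) (x : X) : Set X := {y | ∃ n, 0 < n ∧ f^[n] x = y}

theorem iterate_mem_posOrbit {f : X → X} {x : X} {n : ℕ} (hn : 0 < n) :
    f^[n] x ∈ posOrbit f x :=
  ⟨n, hn, rfl⟩

theorem Function.Semiconj.image_posOrbit {π : Y → X} {g : Y → Y} {f : X → X}
    (h : Semiconj π g f) (y : Y) : π '' posOrbit g y = posOrbit f (π y) := by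
  ext x
  simp only [posOrbit, mem_image, mem_ofPred_eq]
  constructor
  · rintro ⟨_, ⟨n, hn, rfl⟩, rfl⟩
    exact ⟨n, hn, ((h.iterate_right n).eq y).symm⟩
  · rintro ⟨n, hn, rfl⟩
    exact ⟨g^[n] y, ⟨n, hn, rfl⟩, (h.iterate_right n).eq y⟩

theorem Set.MapsTo.posOrbit_subset {f : X → X} {C : Set X} (hC : MapsTo f C C) {x : X}
    (hx : x ∈ C) : posOrbit f x ⊆ C := by
  rintro _ ⟨n, -, rfl⟩
  exact hC.iterate n hx

theorem mapsTo_posOrbit (f : X → X) (x : X) : MapsTo f (posOrbit f x) (posOrbit f x) := by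
  rintro _ ⟨n, hn, rfl⟩
  exact ⟨n + 1, n.succ_pos, iterate_succ_apply' f n x⟩

variable [TopologicalSpace X] [TopologicalSpace Y]

theorem mapsTo_closure_posOrbit {f : X → X} (hf : Continuous f) (x : X) :
    MapsTo f (closure (posOrbit f x)) (closure (posOrbit f x)) :=
  (mapsTo_posOrbit f x).closure hf

theorem closure_posOrbit_subset {f : X → X} {C : Set X} (hC : IsClosed C) (hCf : MapsTo f C C)
    {x : X} (hx : x ∈ C) : closure (posOrbit f x) ⊆ C :=
  hC.closure_subset_iff.2 (hCf.posOrbit_subset hx)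

theorem image_eq_univ_of_dense_posOrbit [CompactSpace Y] [T2Space X] {π : Y → X} {g : Y → Y}
    {f : X → X} (hπ : Continuous π) (h : Semiconj π g f) (hf : ∀ x, Dense (posOrbit f x))
    {C : Set Y} (hC : IsClosed C) (hCg : MapsTo g C C) (hCne : C.Nonempty) :
    π '' C = univ := by
  obtain ⟨y, hy⟩ := hCne
  have hclosed : IsClosed (π '' C) := (hC.isCompact.image hπ).isClosed
  have horbit : posOrbit f (π y) ⊆ π '' C :=
    h.image_posOrbit y ▸ image_mono (hCg.posOrbit_subset hy)
  rw [eq_univ_iff_forall]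
  intro x
  exact hclosed.closure_subset_iff.2 horbit ((hf (π y)).closure_eq ▸ mem_univ x)

theorem exists_uniform_return_time [CompactSpace X] {f : X → X} (hf : Continuous f) {z : X}
    (hW : ∀ w ∈ closure (posOrbit f z), closure (posOrbit f z) ⊆ closure (posOrbit f w))
    {V : Set X} (hV : IsOpen V) (hVW : (closure (posOrbit f z) ∩ V).Nonempty) :
    ∃ N, ∀ w ∈ closure (posOrbit f z), ∃ n ∈ Finset.Icc 1 N, f^[n] w ∈ V := by
  obtain ⟨v, hvW, hvV⟩ := hVW
  let entersBy : ℕ → Set X := fun N => ⋃ n ∈ Finset.Icc 1 N, f^[n] ⁻¹' V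
  have hopen (N : ℕ) : IsOpen (entersBy N) :=
    isOpen_biUnion fun n _ => hV.preimage (hf.iterate n)
  have hmono : Monotone entersBy := fun M N hMN =>
    biUnion_subset_biUnion_left fun n hn => Finset.Icc_subset_Icc_right hMN hn
  have hcover : closure (posOrbit f z) ⊆ ⋃ N, entersBy N := by
    intro w hw
    obtain ⟨_, hwV, n, hn, rfl⟩ := mem_closure_iff.1 (hW w hw hvW) V hV hvV
    exact mem_iUnion.2 ⟨n, mem_biUnion (Finset.mem_Icc.2 ⟨hn, le_rfl⟩) hwV⟩
  obtain ⟨N, hN⟩ := isClosed_closure.isCompact.elim_directed_cover entersBy hopen hcover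
    hmono.directed_le
  refine ⟨N, fun w hw => ?_⟩
  simpa [entersBy] using hN hw

end PosOrbit

theorem Thick.exists_iterate_mem {X : Type*} {H : Set ℕ} (hH : Thick H) {f : X → X} {z : X}
    {W V : Set X} (hzW : posOrbit f z ⊆ W) {N : ℕ}
    (hN : ∀ w ∈ W, ∃ n ∈ Finset.Icc 1 N, f^[n] w ∈ V) :
    ∃ r ∈ H, 0 < r ∧ f^[r] z ∈ V := by
  obtain ⟨t, ht, htH⟩ := hH (Finset.Icc 1 N)
  obtain ⟨n, hn, hnV⟩ := hN _ (hzW (iterate_mem_posOrbit ht))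
  refine ⟨n + t, htH n hn, by omega, ?_⟩
  rwa [iterate_add_apply]

section GroupExtension

variable {X G : Type*} [TopologicalSpace X] [AddCommGroup G] [TopologicalSpace G]
  [DiscreteTopology G]

theorem continuous_prodMap_add {T : X → X} (hT : Continuous T) (a : G) :
    Continuous (Prod.map T (· + a)) :=
  hT.prodMap continuous_of_discreteTopology

variable [CompactSpace X] [T2Space X] [Finite G]

theorem closure_posOrbit_prodMap_add_subset {T : X → X} (hT : Continuous T)
    (hTmin : ∀ x, Dense (posOrbit T x)) (a : G) (z : X × G) {w : X × G}
    (hw : w ∈ closure (posOrbit (Prod.map T (· + a)) z)) :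
    closure (posOrbit (Prod.map T (· + a)) z) ⊆ closure (posOrbit (Prod.map T (· + a)) w) := by
  set S : X × G → X × G := Prod.map T (· + a)
  set W := closure (posOrbit S z)
  set C := closure (posOrbit S w)
  have hS : Continuous S := continuous_prodMap_add hT a
  have hCW : C ⊆ W := closure_posOrbit_subset isClosed_closure (mapsTo_closure_posOrbit hS z) hw
  have hCne : C.Nonempty := ⟨_, subset_closure (iterate_mem_posOrbit (f := S) one_pos)⟩
  obtain ⟨⟨x₀, g⟩, hgC, hx₀⟩ : z.1 ∈ Prod.fst '' C := by
    rw [image_eq_univ_of_dense_posOrbit continuous_fst (fun _ => rfl) hTmin isClosed_closure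
      (mapsTo_closure_posOrbit hS w) hCne]
    trivial
  set R : X × G → X × G := Prod.map id (· + (g - z.2))
  have hRS : Function.Commute R S := fun _ => Prod.ext rfl (add_right_comm _ _ _)
  have hRz : R z ∈ C := by
    convert hgC using 1
    exact Prod.ext hx₀.symm (add_sub_cancel z.2 g)
  have hRW : MapsTo R W C := by
    refine ((hRS.image_posOrbit z ▸ mapsTo_image R _).closure ?_).mono_right
      (closure_posOrbit_subset isClosed_closure (mapsTo_closure_posOrbit hS w) hRz)
    exact continuous_prodMap_add continuous_id _
  have hRiter (n : ℕ) : R^[n] = Prod.map id (· + n • (g - z.2)) := by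
    simp only [R, Prod.map_iterate, iterate_id, add_right_iterate]
  -- `R` maps `W` into itself and has finite order `m`, so `W = R (R^[m - 1] W) ⊆ R W ⊆ C`.
  intro p hp
  set m := addOrderOf (g - z.2)
  have hm : 0 < m := addOrderOf_pos _
  have hRm : R (R^[m - 1] p) = p := by
    rw [← iterate_succ_apply' R, ← Nat.add_one, Nat.sub_add_cancel hm, hRiter,
      addOrderOf_nsmul_eq_zero]
    exact Prod.ext rfl (add_zero _)
  exact hRm ▸ hRW ((hRW.mono_right hCW).iterate (m - 1) hp)

end GroupExtension

theorem Fin.val_nsmul_one (k r : ℕ) [NeZero k] : ((r • (1 : Fin k) : Fin k) : ℕ) = r % k := by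
  induction r with
  | zero => simp
  | succ r ih => rw [succ_nsmul, Fin.val_add, ih, Fin.val_one', ← Nat.add_mod]

theorem dynThick_of_residues_inter_thick (k : ℕ) (hk : 1 ≤ k)
    (H : Fin k → Set ℕ) (hH : ∀ i, Thick (H i)) :
    DynThick (⋃ i : Fin k, ({m : ℕ | m % k = (i : ℕ)} ∩ H i)) := by
  intro S hmin x U hU ⟨u, hu⟩
  have : NeZero k := ⟨by omega⟩
  set T : S.carrier × Fin k → S.carrier × Fin k := Prod.map S.map (· + 1)
  have hT : Continuous T := continuous_prodMap_add S.continuous_map 1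
  set W := closure (posOrbit T (x, 0))
  have hWmin := fun w (hw : w ∈ W) =>
    closure_posOrbit_prodMap_add_subset S.continuous_map hmin (1 : Fin k) (x, 0) hw
  obtain ⟨⟨_, j⟩, huW, rfl⟩ : u ∈ Prod.fst '' W := by
    rw [image_eq_univ_of_dense_posOrbit continuous_fst (fun _ => rfl) hmin isClosed_closure
      (mapsTo_closure_posOrbit hT _) ⟨_, subset_closure (iterate_mem_posOrbit one_pos)⟩]
    trivial
  obtain ⟨N, hN⟩ := exists_uniform_return_time hT hWmin (hU.prod (isOpen_discrete {j}))
    ⟨_, huW, hu, rfl⟩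
  obtain ⟨r, hrH, hr, hrU, hrj⟩ := (hH j).exists_iterate_mem subset_closure hN
  simp only [T, Prod.map_iterate, add_right_iterate, Prod.map_apply, zero_add,
    mem_singleton_iff] at hrU hrj
  exact ⟨r, mem_iUnion.2 ⟨j, hrj ▸ (Fin.val_nsmul_one k r).symm, hrH⟩, hr, hrU⟩
end

section
/- Let (p_i)_{i∈ℕ} be a sequence of distinct primes, (c_i)_{i∈ℕ} a sequence of integers, and (H_i)_{i∈ℕ} a sequence of thick subsets of ℕ. Then the set A := ⋃_{i=1}^{∞} ({m ∈ ℕ : m ≡ c_i (mod p_i)} ∩ H_i) is dynamically thick. Moreover, if for every n ∈ ℕ one has c_n ≢ 0 (mod p_n), and if for every n ∈ ℕ the set H_i ∩ (H_j − n) is empty for all but finitely many pairs (i,j) of distinct positive integers, then A is not an IP set. In particular, there exists a dynamically thick subset of ℕ that is not an IP set. -/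
/-- `A` is an IP set: it contains all finite sums of some sequence of positive
integers. -/
def IsIPSet (A : Set ℕ) : Prop :=
  ∃ x : ℕ → ℕ, (∀ i, 0 < x i) ∧ ∀ F : Finset ℕ, F.Nonempty → (∑ i ∈ F, x i) ∈ A

/-!
Let `G = ∏ᵢ ZMod (pᵢ)` and consider the product of a minimal system `(X, T)` with the
rotation `g ↦ g + 1` of `G`, which has dense orbits by the Chinese remainder theorem. Fix a
minimal subset `Y` of `X × G`; it projects onto `X` and onto `G`. The times at which points of
`Y` enter `U × G` are syndetic, so finitely many translates of the projection `D ⊆ G` of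
`Y ∩ (U × G)` cover `G`, and by Baire the closure of `D` contains a cylinder set. Outside the
finitely many coordinates fixing that cylinder, `D` meets every fibre `{g | gᵢ = t}`. Choosing
such an `i` and `t = gᵢ + cᵢ` for a point `(x, g) ∈ Y`, the visits of `(x, g)` to
`U × {gᵢ = t}` are syndetic, hence occur at some time in the thick set `Hᵢ`, and these times are
`≡ cᵢ (mod pᵢ)`.

If the sums of `(xₖ)` lie in `A`, the sums `m` avoiding `x₀` satisfy `m, m + x₀ ∈ A`, which by
the finiteness hypothesis forces `m` into one of finitely many progressions `cᵢ + pᵢℤ`. But some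
such sum is divisible by the product of the corresponding `pᵢ`, while no `cᵢ` is `≡ 0`.
-/

open Set Function

section MinimalSet

variable {α : Type*} [TopologicalSpace α] {f : α → α} {Y V : Set α}

def IsMinimalSet (f : α → α) (Y : Set α) : Prop :=
  Minimal (fun Z : Set α => Z.Nonempty ∧ IsClosed Z ∧ MapsTo f Z Z) Y

theorem exists_isMinimalSet [CompactSpace α] [Nonempty α] (f : α → α) :
    ∃ Y, IsMinimalSet f Y := by
  let S := {Z : Set α | Z.Nonempty ∧ IsClosed Z ∧ MapsTo f Z Z}
  have hS : ∀ C ⊆ S, IsChain (· ⊆ ·) C → C.Nonempty → ∃ lb ∈ S, ∀ Z ∈ C, lb ⊆ Z := by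
    intro C hC hchain hCne
    have : Nonempty C := hCne.to_subtype
    refine ⟨⋂₀ C, ⟨?_, isClosed_sInter fun Z hZ => (hC hZ).2.1,
      fun z hz Z hZ => (hC hZ).2.2 (hz Z hZ)⟩, fun Z hZ => sInter_subset_of_mem hZ⟩
    exact IsCompact.nonempty_sInter_of_directed_nonempty_isCompact_isClosed
      (hchain.symm.directedOn (r := fun U V : Set α => U ⊇ V)) (fun Z hZ => (hC hZ).1)
      (fun Z hZ => (hC hZ).2.1.isCompact) (fun Z hZ => (hC hZ).2.1)
  obtain ⟨Y, -, hY⟩ :=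
    zorn_superset_nonempty S hS univ ⟨univ_nonempty, isClosed_univ, mapsTo_univ f univ⟩
  exact ⟨Y, hY⟩

namespace IsMinimalSet

theorem exists_iterate_mem (hY : IsMinimalSet f Y) (hf : Continuous f) (hV : IsOpen V)
    (hVY : (Y ∩ V).Nonempty) {z : α} (hz : z ∈ Y) : ∃ n, f^[n] z ∈ V := by
  obtain ⟨-, hYc, hYf⟩ := hY.prop
  set O := closure (range fun n => f^[n] z)
  have hOY : O ⊆ Y := closure_minimal (range_subset_iff.2 fun n => hYf.iterate n hz) hYc
  have hOf : MapsTo f O O :=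
    MapsTo.closure (fun _ ⟨n, hn⟩ => ⟨n + 1, hn ▸ iterate_succ_apply' f n z⟩) hf
  have hO : O = Y := hY.eq_of_subset ⟨⟨z, subset_closure ⟨0, rfl⟩⟩, isClosed_closure, hOf⟩ hOY
  obtain ⟨w, hwY, hwV⟩ := hVY
  obtain ⟨_, hV', n, rfl⟩ := mem_closure_iff.1 (hO ▸ hwY : w ∈ O) V hV hwV
  exact ⟨n, hV'⟩

theorem exists_uniform_iterate_mem [CompactSpace α] (hY : IsMinimalSet f Y) (hf : Continuous f)
    (hV : IsOpen V) (hVY : (Y ∩ V).Nonempty) : ∃ N, ∀ z ∈ Y, ∃ n ≤ N, f^[n] z ∈ V := by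
  obtain ⟨t, ht⟩ := hY.prop.2.1.isCompact.elim_finite_subcover (fun n => f^[n] ⁻¹' V)
    (fun n => hV.preimage (hf.iterate n))
    fun z hz => mem_iUnion.2 (hY.exists_iterate_mem hf hV hVY hz)
  refine ⟨t.sup id, fun z hz => ?_⟩
  obtain ⟨n, hnt, hn⟩ := mem_iUnion₂.1 (ht hz)
  exact ⟨n, t.le_sup (f := id) hnt, hn⟩

theorem exists_mem_thick_iterate_mem [CompactSpace α] (hY : IsMinimalSet f Y)
    (hf : Continuous f) (hV : IsOpen V) (hVY : (Y ∩ V).Nonempty) {H : Set ℕ} (hH : Thick H)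
    {z : α} (hz : z ∈ Y) : ∃ n ∈ H, 0 < n ∧ f^[n] z ∈ V := by
  obtain ⟨N, hN⟩ := hY.exists_uniform_iterate_mem hf hV hVY
  obtain ⟨m, hm, hmH⟩ := hH (Finset.range (N + 1))
  obtain ⟨k, hk, hkV⟩ := hN _ (hY.prop.2.2.iterate m hz)
  exact ⟨k + m, hmH k (Finset.mem_range_succ_iff.2 hk), by omega, by rwa [iterate_add_apply]⟩

end IsMinimalSet

end MinimalSet

theorem MetricDynSystem.Minimal.eq_univ {S : MetricDynSystem} (hS : S.Minimal)
    {Z : Set S.carrier} (hne : Z.Nonempty) (hZ : IsClosed Z) (hZS : MapsTo S.map Z Z) :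
    Z = univ := by
  obtain ⟨z, hz⟩ := hne
  rw [← hZ.closure_eq]
  exact ((hS z).mono (by rintro _ ⟨n, -, rfl⟩; exact hZS.iterate n hz)).closure_eq

theorem MetricDynSystem.Minimal.exists_prod_mem {S : MetricDynSystem} (hS : S.Minimal)
    {β : Type*} [TopologicalSpace β] [CompactSpace β] {g : β → β} {Y : Set (S.carrier × β)}
    (hne : Y.Nonempty) (hY : IsClosed Y) (hYS : MapsTo (Prod.map S.map g) Y Y)
    (z : S.carrier) : ∃ b, (z, b) ∈ Y := by
  have hfst := hS.eq_univ (hne.image Prod.fst) (hY.isCompact.image continuous_fst).isClosed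
    fun _ ⟨w, hw, hwz⟩ => ⟨_, hYS hw, hwz ▸ rfl⟩
  obtain ⟨⟨_, b⟩, hb, rfl⟩ : z ∈ Prod.fst '' Y := hfst ▸ mem_univ z
  exact ⟨b, hb⟩

theorem nonempty_interior_closure_of_finite_translates {G : Type*} [TopologicalSpace G]
    [AddGroup G] [ContinuousAdd G] [BaireSpace G] [Nonempty G] {D s : Set G} (hs : s.Finite)
    (hcover : ∀ g, ∃ a ∈ s, g + a ∈ D) : (interior (closure D)).Nonempty := by
  have : Countable s := hs.countable.to_subtype
  obtain ⟨a, g, hg⟩ := nonempty_interior_of_iUnion_of_closed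
    (f := fun a : s => (· + (a : G)) ⁻¹' closure D)
    (fun a => isClosed_closure.preimage (continuous_add_const _))
    (eq_univ_of_forall fun g =>
      let ⟨a, ha, hga⟩ := hcover g
      mem_iUnion.2 ⟨⟨a, ha⟩, subset_closure hga⟩)
  have hint : interior ((· + (a : G)) ⁻¹' closure D) = (· + (a : G)) ⁻¹' interior (closure D) :=
    ((Homeomorph.addRight (a : G)).preimage_interior _).symm
  exact ⟨_, hint ▸ hg⟩

theorem isOpen_setOf_apply_eq {ι : Type*} {π : ι → Type*} [∀ i, TopologicalSpace (π i)]
    [∀ i, DiscreteTopology (π i)] (i : ι) (t : π i) : IsOpen {g : ∀ i, π i | g i = t} :=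
  (isOpen_discrete {t}).preimage (continuous_apply i)

theorem exists_finset_forall_exists_apply_eq {ι : Type*} {π : ι → Type*}
    [∀ i, TopologicalSpace (π i)] [∀ i, DiscreteTopology (π i)] {D : Set (∀ i, π i)}
    (hD : (interior (closure D)).Nonempty) :
    ∃ J : Finset ι, ∀ i ∉ J, ∀ t : π i, ∃ g ∈ D, g i = t := by
  classical
  obtain ⟨h, hh⟩ := hD
  obtain ⟨J, u, hu, hJ⟩ := isOpen_pi_iff.1 isOpen_interior h hh
  refine ⟨J, fun i hi t => ?_⟩
  have hmem : update h i t ∈ closure D := interior_subset <| hJ fun j hj => by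
    rw [update_of_ne (ne_of_mem_of_not_mem hj hi)]
    exact (hu j hj).2
  obtain ⟨g, hgt, hgD⟩ := mem_closure_iff.1 hmem _ (isOpen_setOf_apply_eq i t) (update_self ..)
  exact ⟨g, hgD, hgt⟩

section Odometer

variable {ι β : Type*} {p : ι → ℕ}

theorem pairwise_coprime_of_prime_of_injective (hp : ∀ i, (p i).Prime) (hinj : Injective p) :
    Pairwise (Nat.Coprime on p) :=
  fun i j hij => (Nat.coprime_primes (hp i) (hp j)).2 (hinj.ne hij)

theorem denseRange_natCast_pi_zmod [∀ i, NeZero (p i)] (hp : Pairwise (Nat.Coprime on p)) :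
    DenseRange (fun n : ℕ => (n : ∀ i, ZMod (p i))) := by
  classical
  refine dense_iff_inter_open.2 fun O hO ⟨h, hh⟩ => ?_
  obtain ⟨J, u, hu, hJO⟩ := isOpen_pi_iff.1 hO h hh
  obtain ⟨n, hn⟩ := Nat.chineseRemainderOfFinset (fun j => (h j).val) p J
    (fun j _ => NeZero.ne (p j)) (hp.set_pairwise _)
  refine ⟨n, hJO fun j hj => ?_, n, rfl⟩
  rw [Pi.natCast_apply, (ZMod.natCast_eq_natCast_iff _ _ _).2 (hn j hj), ZMod.natCast_zmod_val]
  exact (hu j hj).2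

def prodOdometer (p : ι → ℕ) (T : β → β) :
    β × (∀ i, ZMod (p i)) → β × (∀ i, ZMod (p i)) :=
  Prod.map T (· + 1)

theorem prodOdometer_iterate (T : β → β) (n : ℕ) (z : β) (g : ∀ i, ZMod (p i)) :
    (prodOdometer p T)^[n] (z, g) = (T^[n] z, g + n) := by
  simp [prodOdometer, Prod.map_iterate, add_right_iterate]

variable [TopologicalSpace β] {T : β → β}

theorem Continuous.prodOdometer (hT : Continuous T) : Continuous (prodOdometer p T) :=
  hT.prodMap (continuous_add_const 1)

variable [CompactSpace β] [∀ i, NeZero (p i)]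

theorem image_snd_eq_univ_of_mapsTo_prodOdometer (hp : Pairwise (Nat.Coprime on p))
    {Y : Set (β × ∀ i, ZMod (p i))} (hne : Y.Nonempty) (hY : IsClosed Y)
    (hYT : MapsTo (prodOdometer p T) Y Y) : Prod.snd '' Y = univ := by
  obtain ⟨⟨z, g⟩, hzg⟩ := hne
  have hsub : range (fun n : ℕ => g + n) ⊆ Prod.snd '' Y := by
    rintro _ ⟨n, rfl⟩
    exact ⟨_, hYT.iterate n hzg, by rw [prodOdometer_iterate]⟩
  have hdense : DenseRange (fun n : ℕ => g + n) :=
    (add_left_surjective g).denseRange.comp (denseRange_natCast_pi_zmod hp)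
      (continuous_const_add g)
  rw [← (hY.isCompact.image continuous_snd).isClosed.closure_eq]
  exact (hdense.mono hsub).closure_eq

theorem IsMinimalSet.exists_finset_forall_inter_prod_nonempty
    (hp : Pairwise (Nat.Coprime on p)) (hT : Continuous T) {Y : Set (β × ∀ i, ZMod (p i))}
    (hY : IsMinimalSet (prodOdometer p T) Y) {U : Set β} (hU : IsOpen U)
    (hUY : (Y ∩ U ×ˢ univ).Nonempty) :
    ∃ J : Finset ι, ∀ i ∉ J, ∀ t : ZMod (p i), (Y ∩ U ×ˢ {g | g i = t}).Nonempty := by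
  obtain ⟨N, hN⟩ := hY.exists_uniform_iterate_mem hT.prodOdometer (hU.prod isOpen_univ) hUY
  have hsnd := image_snd_eq_univ_of_mapsTo_prodOdometer hp hY.prop.1 hY.prop.2.1 hY.prop.2.2
  have hcover : ∀ g, ∃ a ∈ (Nat.cast '' Iic N : Set (∀ i, ZMod (p i))),
      g + a ∈ {g | ∃ z ∈ U, (z, g) ∈ Y} := by
    intro g
    obtain ⟨⟨z, _⟩, hz, rfl⟩ : g ∈ Prod.snd '' Y := hsnd ▸ mem_univ g
    obtain ⟨n, hnN, hn⟩ := hN _ hz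
    have hnY := hY.prop.2.2.iterate n hz
    rw [prodOdometer_iterate] at hn hnY
    exact ⟨n, ⟨n, hnN, rfl⟩, _, hn.1, hnY⟩
  obtain ⟨J, hJ⟩ := exists_finset_forall_exists_apply_eq
    (nonempty_interior_closure_of_finite_translates ((finite_Iic N).image _) hcover)
  refine ⟨J, fun i hi t => ?_⟩
  obtain ⟨g, ⟨z, hzU, hzY⟩, hgt⟩ := hJ i hi t
  exact ⟨(z, g), hzY, hzU, hgt⟩

end Odometer

section ProgressionUnion

variable {ι : Type*} {p : ι → ℕ}

def progressionUnion (p : ι → ℕ) (c : ι → ℤ) (H : ι → Set ℕ) : Set ℕ :=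
  ⋃ i, {m : ℕ | (m : ℤ) ≡ c i [ZMOD p i]} ∩ H i

theorem dynThick_progressionUnion [Infinite ι] [∀ i, NeZero (p i)]
    (hp : Pairwise (Nat.Coprime on p)) (c : ι → ℤ) {H : ι → Set ℕ} (hH : ∀ i, Thick (H i)) :
    DynThick (progressionUnion p c H) := by
  intro S hS x U hU ⟨u, hu⟩
  obtain ⟨Y, hY⟩ := exists_isMinimalSet (prodOdometer p S.map)
  have hfst := hS.exists_prod_mem hY.prop.1 hY.prop.2.1 hY.prop.2.2
  obtain ⟨gx, hxY⟩ := hfst x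
  obtain ⟨gu, huY⟩ := hfst u
  obtain ⟨J, hJ⟩ :=
    hY.exists_finset_forall_inter_prod_nonempty hp S.continuous_map hU ⟨_, huY, hu, mem_univ _⟩
  obtain ⟨i, hi⟩ := Infinite.exists_notMem_finset J
  obtain ⟨n, hnH, hn, hnV⟩ := hY.exists_mem_thick_iterate_mem S.continuous_map.prodOdometer
    (hU.prod (isOpen_setOf_apply_eq i (gx i + c i))) (hJ i hi _) (hH i) hxY
  rw [prodOdometer_iterate] at hnV
  obtain ⟨hnU, hni⟩ := hnV
  refine ⟨n, mem_iUnion.2 ⟨i, ?_, hnH⟩, hn, hnU⟩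
  show ((n : ℕ) : ℤ) ≡ c i [ZMOD p i]
  rw [← ZMod.intCast_eq_intCast_iff, Int.cast_natCast]
  simpa using hni

theorem exists_lt_dvd_sum_Ico (s : ℕ → ℕ) {P : ℕ} (hP : P ≠ 0) (a : ℕ) :
    ∃ k l, a ≤ k ∧ k < l ∧ P ∣ ∑ i ∈ Finset.Ico k l, s i := by
  have : NeZero P := ⟨hP⟩
  obtain ⟨k, l, hkl, heq⟩ := Finite.exists_ne_map_eq_of_infinite
    fun k => ((∑ i ∈ Finset.range (a + k), s i : ℕ) : ZMod P)
  wlog h : k < l generalizing k l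
  · exact this l k hkl.symm heq.symm (by omega)
  refine ⟨a + k, a + l, by omega, by omega, (ZMod.natCast_eq_zero_iff _ _).1 ?_⟩
  rwa [← Finset.sum_range_add_sum_Ico s (by omega : a + k ≤ a + l), Nat.cast_add,
    left_eq_add] at heq

theorem not_isIPSet_progressionUnion [∀ i, NeZero (p i)] (hinj : Injective p) {c : ι → ℤ}
    (hc : ∀ i, ¬ c i ≡ 0 [ZMOD p i]) {H : ι → Set ℕ}
    (hfin : ∀ n, 0 < n → {q : ι × ι | q.1 ≠ q.2 ∧ (H q.1 ∩ NSub (H q.2) n).Nonempty}.Finite) :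
    ¬ IsIPSet (progressionUnion p c H) := by
  rintro ⟨x, hx, hxA⟩
  set I := Prod.fst '' {q : ι × ι | q.1 ≠ q.2 ∧ (H q.1 ∩ NSub (H q.2) (x 0)).Nonempty} ∪
    {i | p i ∣ x 0}
  have hdvd : (p ⁻¹' {d | d ∣ x 0}).Finite :=
    ((finite_Iic (x 0)).subset fun d hd => Nat.le_of_dvd (hx 0) hd).preimage hinj.injOn
  have hI : I.Finite := ((hfin _ (hx 0)).image _).union hdvd
  obtain ⟨k, l, hk, hkl, hdvd⟩ := exists_lt_dvd_sum_Ico x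
    (Finset.prod_ne_zero_iff.2 fun i _ => NeZero.ne (p i) : ∏ i ∈ hI.toFinset, p i ≠ 0) 1
  set m := ∑ i ∈ Finset.Ico k l, x i
  have hm : 0 < m := Finset.sum_pos (fun i _ => hx i) (Finset.nonempty_Ico.2 hkl)
  obtain ⟨i, hmi, hmH⟩ := mem_iUnion.1 (hxA _ (Finset.nonempty_Ico.2 hkl))
  have hsum : ∑ i ∈ insert 0 (Finset.Ico k l), x i = x 0 + m :=
    Finset.sum_insert (by simp; omega)
  obtain ⟨j, hmj, hmjH⟩ := mem_iUnion.1 (hsum ▸ hxA _ (Finset.insert_nonempty _ _))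
  have hiI : i ∈ I := by
    rcases eq_or_ne i j with rfl | hij
    · have h : (x 0 : ℤ) + m ≡ 0 + m [ZMOD p i] := by
        rw [zero_add, ← Nat.cast_add]
        exact hmj.trans hmi.symm
      exact Or.inr (Int.natCast_dvd_natCast.1 (Int.modEq_zero_iff_dvd.1 (h.add_right_cancel' _)))
    · exact Or.inl ⟨(i, j), ⟨hij, m, hmH, hm, by rwa [add_comm]⟩, rfl⟩
  have hpm : p i ∣ m := (Finset.dvd_prod_of_mem p (hI.mem_toFinset.2 hiI)).trans hdvd
  exact hc i (hmi.symm.trans (Int.modEq_zero_iff_dvd.2 (Int.natCast_dvd_natCast.2 hpm)))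

end ProgressionUnion

def sparseBlocks (i : ℕ) : Set ℕ :=
  ⋃ k, Icc (4 ^ Nat.pair i k) (4 ^ Nat.pair i k + Nat.pair i k)

theorem thick_sparseBlocks (i : ℕ) : Thick (sparseBlocks i) := by
  intro F
  set N := F.sup id
  refine ⟨4 ^ Nat.pair i N, by positivity, fun f hf => mem_iUnion.2 ⟨N, by omega, ?_⟩⟩
  have hfN : f ≤ N := F.le_sup (f := id) hf
  have hN := Nat.right_le_pair i N
  omega

theorem lt_and_le_of_mem_Icc_four_pow {a b m n : ℕ} (hab : a ≠ b)
    (ha : m ∈ Icc (4 ^ a) (4 ^ a + a)) (hb : m + n ∈ Icc (4 ^ b) (4 ^ b + b)) :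
    a < b ∧ b ≤ n := by
  obtain ⟨ha₁, ha₂⟩ := ha
  obtain ⟨hb₁, hb₂⟩ := hb
  have hlt : a < b := by
    by_contra! h
    have h₁ : 4 ^ (b + 1) ≤ 4 ^ a := Nat.pow_le_pow_right (by norm_num) (by omega)
    have h₂ : b < 4 ^ b := Nat.lt_pow_self (by norm_num)
    rw [pow_succ] at h₁
    omega
  refine ⟨hlt, ?_⟩
  obtain ⟨e, rfl⟩ : ∃ e, b = e + 1 := ⟨b - 1, by omega⟩
  have h₁ : 4 ^ a ≤ 4 ^ e := Nat.pow_le_pow_right (by norm_num) (by omega)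
  have h₂ : e < 4 ^ e := Nat.lt_pow_self (by norm_num)
  rw [pow_succ] at hb₁
  omega

theorem finite_setOf_sparseBlocks_inter_nonempty (n : ℕ) :
    {q : ℕ × ℕ | q.1 ≠ q.2 ∧ (sparseBlocks q.1 ∩ NSub (sparseBlocks q.2) n).Nonempty}.Finite := by
  refine (((finite_Iic n).prod (finite_Iic n)).image
    fun q => ((Nat.unpair q.1).1, (Nat.unpair q.2).1)).subset ?_
  rintro ⟨i, j⟩ ⟨hij, m, hm, -, hmn⟩
  dsimp only at hij hm hmn
  obtain ⟨k, hk⟩ := mem_iUnion.1 hm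
  obtain ⟨l, hl⟩ := mem_iUnion.1 hmn
  obtain ⟨h₁, h₂⟩ :=
    lt_and_le_of_mem_Icc_four_pow (fun h => hij (Nat.pair_eq_pair.1 h).1) hk hl
  exact ⟨(Nat.pair i k, Nat.pair j l), ⟨by simp only [mem_Iic]; omega, h₂⟩, by simp⟩

theorem exists_dynThick_not_isIPSet : ∃ A : Set ℕ, DynThick A ∧ ¬ IsIPSet A := by
  have hinj := Nat.nth_injective Nat.infinite_setOfPred_prime
  have : ∀ i, NeZero (Nat.nth Nat.Prime i) := fun i => ⟨(Nat.prime_nth_prime i).ne_zero⟩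
  refine ⟨progressionUnion (Nat.nth Nat.Prime) (fun _ => 1) sparseBlocks,
    dynThick_progressionUnion (pairwise_coprime_of_prime_of_injective Nat.prime_nth_prime hinj)
      _ thick_sparseBlocks,
    not_isIPSet_progressionUnion hinj (fun i h => ?_) fun n _ =>
      finite_setOf_sparseBlocks_inter_nonempty n⟩
  have : Nat.nth Nat.Prime i ∣ 1 := by exact_mod_cast Int.modEq_zero_iff_dvd.1 h
  exact (Nat.prime_nth_prime i).not_dvd_one this

theorem dynThick_of_prime_progressions_inter_thick
    (p : ℕ → ℕ) (hp : ∀ i, Nat.Prime (p i)) (hpinj : Function.Injective p)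
    (c : ℕ → ℤ) (H : ℕ → Set ℕ) (hH : ∀ i, Thick (H i)) :
    DynThick (⋃ i : ℕ, ({m : ℕ | (m : ℤ) ≡ c i [ZMOD (p i : ℤ)]} ∩ H i)) ∧
      ((∀ n : ℕ, ¬ (c n ≡ 0 [ZMOD (p n : ℤ)])) →
        (∀ n : ℕ, 0 < n →
          {q : ℕ × ℕ | q.1 ≠ q.2 ∧ (H q.1 ∩ NSub (H q.2) n).Nonempty}.Finite) →
        ¬ IsIPSet (⋃ i : ℕ, ({m : ℕ | (m : ℤ) ≡ c i [ZMOD (p i : ℤ)]} ∩ H i))) ∧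
      (∃ A : Set ℕ, DynThick A ∧ ¬ IsIPSet A) := by
  have : ∀ i, NeZero (p i) := fun i => ⟨(hp i).ne_zero⟩
  exact ⟨dynThick_progressionUnion (pairwise_coprime_of_prime_of_injective hp hpinj) c hH,
    fun hc hfin => not_isIPSet_progressionUnion hpinj hc hfin, exists_dynThick_not_isIPSet⟩
end

section
/- Let (Z_i, R_i), i ∈ ℕ, be a disjoint collection of minimal topological dynamical systems. For every minimal system (X,T) and every ε > 0, for all sufficiently large i the following holds: for every joining J of (X,T) and (Z_i,R_i) and every z ∈ Z_i, the set {x ∈ X : (x,z) ∈ J} is ε-dense in X, i.e. every point of X lies within distance ε of this set. -/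
/-- The product of the systems `Z i` over a finite index set `F`. -/
def prodSystem (Z : ℕ → MetricDynSystem) (F : Finset ℕ) : MetricDynSystem where
  carrier := ∀ i : F, (Z i.1).carrier
  metric := inferInstance
  cpt := inferInstance
  carrier_nonempty := inferInstance
  map := fun z i => (Z i.1).map (z i)
  continuous_map := continuous_pi fun i => ((Z i.1).continuous_map).comp (continuous_apply i)

/-- A collection of minimal systems is disjoint if every finite product is minimal. -/
def IsDisjointFamily (Z : ℕ → MetricDynSystem) : Prop :=
  ∀ F : Finset ℕ, (prodSystem Z F).Minimal

/-- A joining of two systems: a nonempty closed invariant subset of the product system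
whose projections to both coordinates are onto. -/
def IsJoining (S₁ S₂ : MetricDynSystem) (J : Set (S₁.carrier × S₂.carrier)) : Prop :=
  J.Nonempty ∧ IsClosed J ∧ (∀ q ∈ J, (S₁.map q.1, S₂.map q.2) ∈ J) ∧
    Prod.fst '' J = Set.univ ∧ Prod.snd '' J = Set.univ

/-!
Fix a nonempty open set `U ⊆ X`. By minimality and compactness there is `N` such that every
orbit of `X` enters `U` at some time `n ∈ [1, N]`. Suppose `N` distinct indices `i` carry a
joining `Jᵢ` and a point `zᵢ` whose fiber misses `U`. Number them `1, …, N` and pull each `zᵢ`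
back to a `wᵢ` with `R_i^k wᵢ = zᵢ`, `k` being the number of `i`. Disjointness makes the fibers
over all the `wᵢ` meet in a point `x`; if `T^k x ∈ U`, then `T^k x` lies in the fiber over `zᵢ`
for the index numbered `k`, a contradiction. So for all large `i` every fiber meets `U`; apply
this to the finitely many balls of radius `ε / 2` covering `X`.
-/

open Filter Function Metric Set

namespace MetricDynSystem

variable {S : MetricDynSystem}

theorem Minimal.eq_univ_of_isClosed (hS : S.Minimal) {A : Set S.carrier} (hA : IsClosed A)
    (hinv : MapsTo S.map A A) (hne : A.Nonempty) : A = univ := by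
  obtain ⟨a, ha⟩ := hne
  refine eq_univ_of_univ_subset ?_
  rw [← (hS a).closure_eq]
  refine closure_minimal ?_ hA
  rintro _ ⟨n, -, rfl⟩
  exact hinv.iterate n ha

theorem Minimal.surjective (hS : S.Minimal) : Surjective S.map :=
  range_eq_univ.1 <| hS.eq_univ_of_isClosed (isCompact_range S.continuous_map).isClosed
    (fun a _ => mem_range_self a) (range_nonempty _)

theorem Minimal.exists_forall_exists_iterate_mem (hS : S.Minimal) {U : Set S.carrier}
    (hU : IsOpen U) (hne : U.Nonempty) : ∃ N : ℕ, ∀ x, ∃ n ∈ Icc 1 N, S.map^[n] x ∈ U := by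
  let V : ℕ → Set S.carrier := fun N => ⋃ n ∈ Icc 1 N, S.map^[n] ⁻¹' U
  have hV_open (N : ℕ) : IsOpen (V N) :=
    isOpen_biUnion fun n _ => hU.preimage (S.continuous_map.iterate n)
  have hV_mono : Monotone V := fun _ _ h => biUnion_subset_biUnion_left (Icc_subset_Icc_right h)
  have hV_cover : univ ⊆ ⋃ N, V N := fun x _ => by
    obtain ⟨_, ⟨n, hn, rfl⟩, hnU⟩ := (hS x).exists_mem_open hU hne
    exact mem_iUnion.2 ⟨n, mem_biUnion ⟨hn, le_rfl⟩ hnU⟩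
  obtain ⟨N, hN⟩ := isCompact_univ.elim_directed_cover V hV_open hV_cover hV_mono.directed_le
  exact ⟨N, fun x => by simpa [V] using hN (mem_univ x)⟩

end MetricDynSystem

open MetricDynSystem

theorem IsJoining.iterate_mem {S₁ S₂ : MetricDynSystem} {J : Set (S₁.carrier × S₂.carrier)}
    (hJ : IsJoining S₁ S₂ J) {q : S₁.carrier × S₂.carrier} (hq : q ∈ J) (n : ℕ) :
    (S₁.map^[n] q.1, S₂.map^[n] q.2) ∈ J := by
  have hinv : MapsTo (Prod.map S₁.map S₂.map) J J := hJ.2.2.1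
  have hmem := hinv.iterate n hq
  rw [Prod.map_iterate] at hmem
  exact hmem

variable {Z : ℕ → MetricDynSystem} {X : MetricDynSystem}

theorem IsDisjointFamily.exists_forall_mem_joining (hdisj : IsDisjointFamily Z) {F : Finset ℕ}
    {J : ∀ j : F, Set (X.carrier × (Z j).carrier)} (hJ : ∀ j : F, IsJoining X (Z j) (J j))
    (ζ : ∀ j : F, (Z j).carrier) : ∃ x, ∀ j : F, (x, ζ j) ∈ J j := by
  let P := prodSystem Z F
  let W : Set (X.carrier × P.carrier) := ⋂ j : F, (fun q => (q.1, q.2 j)) ⁻¹' J j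
  have hW_closed : IsClosed W := isClosed_iInter fun j =>
    (hJ j).2.1.preimage (continuous_fst.prodMk ((continuous_apply j).comp continuous_snd))
  have hW_proj : Prod.snd '' W = univ := by
    refine (hdisj F).eq_univ_of_isClosed (hW_closed.isCompact.image continuous_snd).isClosed ?_ ?_
    · rintro _ ⟨q, hq, rfl⟩
      exact ⟨Prod.map X.map P.map q, mem_iInter.2 fun j => (hJ j).2.2.1 _ (mem_iInter.1 hq j), rfl⟩
    · obtain ⟨x⟩ := X.carrier_nonempty
      have hfiber (j : F) : ∃ w, (x, w) ∈ J j := by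
        obtain ⟨q, hq, hqx⟩ := (hJ j).2.2.2.1.symm ▸ mem_univ x
        exact ⟨q.2, hqx ▸ hq⟩
      choose w hw using hfiber
      exact ⟨w, (x, w), mem_iInter.2 hw, rfl⟩
  obtain ⟨q, hq, rfl⟩ := hW_proj.symm ▸ mem_univ ζ
  exact ⟨q.1, mem_iInter.1 hq⟩

theorem card_lt_of_forall_joining_fiber_avoids (hZ : ∀ i, (Z i).Minimal)
    (hdisj : IsDisjointFamily Z) {U : Set X.carrier} {N : ℕ}
    (hN : ∀ x, ∃ n ∈ Icc 1 N, X.map^[n] x ∈ U) {F : Finset ℕ}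
    (hF : ∀ i ∈ F, ∃ J, IsJoining X (Z i) J ∧ ∃ z, ∀ x ∈ U, (x, z) ∉ J) : F.card < N := by
  by_contra! hcard
  choose J hJ z hz using fun j : F => hF j j.2
  -- the index numbered `k` is made to reach its bad point at time `k + 1`
  let time (j : F) : ℕ := F.equivFin j + 1
  choose w hw using fun j : F => ((hZ j).surjective.iterate (time j)) (z j)
  obtain ⟨x, hx⟩ := hdisj.exists_forall_mem_joining hJ w
  obtain ⟨n, ⟨hn1, hnN⟩, hnU⟩ := hN x
  let j := F.equivFin.symm ⟨n - 1, by omega⟩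
  have htime : time j = n := by simp only [time, j, Equiv.apply_symm_apply]; omega
  have hmem := (hJ j).iterate_mem (hx j) (time j)
  rw [hw, htime] at hmem
  exact hz j _ hnU hmem

theorem eventually_forall_joining_exists_fiber_mem (hZ : ∀ i, (Z i).Minimal)
    (hdisj : IsDisjointFamily Z) (hX : X.Minimal) {U : Set X.carrier} (hU : IsOpen U)
    (hne : U.Nonempty) :
    ∀ᶠ i in atTop, ∀ J, IsJoining X (Z i) J → ∀ z, ∃ x ∈ U, (x, z) ∈ J := by
  obtain ⟨N, hN⟩ := hX.exists_forall_exists_iterate_mem hU hne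
  have hfin : {i | ∃ J, IsJoining X (Z i) J ∧ ∃ z, ∀ x ∈ U, (x, z) ∉ J}.Finite := by
    by_contra hinf
    obtain ⟨F, hFsub, hFcard⟩ := Set.Infinite.exists_subset_card_eq hinf N
    exact (card_lt_of_forall_joining_fiber_avoids hZ hdisj hN fun i hi => hFsub hi).ne hFcard
  rw [← Nat.cofinite_eq_atTop]
  filter_upwards [hfin.eventually_cofinite_notMem] with i hi J hJ z
  by_contra! h
  exact hi ⟨J, hJ, z, h⟩

theorem joinings_eventually_eps_dense
    (Z : ℕ → MetricDynSystem) (hZ : ∀ i, (Z i).Minimal) (hdisj : IsDisjointFamily Z)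
    (X : MetricDynSystem) (hX : X.Minimal) (ε : ℝ) (hε : 0 < ε) :
    ∃ I : ℕ, ∀ i : ℕ, I ≤ i →
      ∀ J : Set (X.carrier × (Z i).carrier), IsJoining X (Z i) J →
        ∀ z : (Z i).carrier, ∀ x₀ : X.carrier,
          ∃ x : X.carrier, (x, z) ∈ J ∧ dist x₀ x ≤ ε := by
  obtain ⟨t, -, ht, hcover⟩ := (isCompact_univ (X := X.carrier)).finite_cover_balls (half_pos hε)
  have hmeets_all : ∀ᶠ i in atTop, ∀ p ∈ t, ∀ J, IsJoining X (Z i) J → ∀ z,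
      ∃ x ∈ ball p (ε / 2), (x, z) ∈ J := (eventually_all_finite ht).2 fun p _ =>
    eventually_forall_joining_exists_fiber_mem hZ hdisj hX isOpen_ball
      (nonempty_ball.2 (half_pos hε))
  obtain ⟨I, hI⟩ := hmeets_all.exists_forall_of_atTop
  refine ⟨I, fun i hi J hJ z x₀ => ?_⟩
  obtain ⟨p, hp, hx₀p⟩ := mem_iUnion₂.1 (hcover (mem_univ x₀))
  obtain ⟨x, hxp, hxJ⟩ := hI i hi p hp J hJ z
  refine ⟨x, hxJ, ?_⟩
  calc dist x₀ x ≤ dist x₀ p + dist x p := dist_triangle_right _ _ _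
    _ ≤ ε / 2 + ε / 2 := add_le_add (mem_ball.1 hx₀p).le (mem_ball.1 hxp).le
    _ = ε := add_halves ε
end

section
/- Let (X_i,T_i), i ∈ ℕ, be a disjoint collection of minimal topological dynamical systems. For every minimal system (Y,S) and every nonempty open V ⊆ Y, there exists i ∈ ℕ such that: for every nonempty open U ⊆ X_i there exists s ∈ ℕ such that for all (x,y) ∈ X_i × Y the set R_{T_i}(x,U) ∩ R_S(y,V) is syndetic with gaps bounded by s, i.e. it meets every interval of s consecutive positive integers. -/
/-- `R(x, U)`: the set of (positive) times at which `x` visits `U`. -/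
def RetTimes (S : MetricDynSystem) (x : S.carrier) (U : Set S.carrier) : Set ℕ :=
  {n : ℕ | 0 < n ∧ S.map^[n] x ∈ U}

/-- If every point of a compact space visits the open set `W` at some positive time,
then visits happen with uniformly bounded gaps. -/
lemma uniform_visit {Z : Type} [TopologicalSpace Z] [CompactSpace Z]
    {f : Z → Z} (hf : Continuous f) {W : Set Z} (hW : IsOpen W)
    (h : ∀ z, ∃ n, 0 < n ∧ f^[n] z ∈ W) :
    ∃ s, 0 < s ∧ ∀ z m, ∃ n, m + 1 ≤ n ∧ n ≤ m + s ∧ f^[n] z ∈ W := by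
  have hcov : (Set.univ : Set Z) ⊆ ⋃ n : ℕ, f^[n + 1] ⁻¹' W := by
    intro z _
    obtain ⟨n, hn, hz⟩ := h z
    exact Set.mem_iUnion.2 ⟨n - 1, by simpa [Nat.sub_add_cancel hn] using hz⟩
  obtain ⟨t, ht⟩ := isCompact_univ.elim_finite_subcover (fun n : ℕ => f^[n + 1] ⁻¹' W)
    (fun n => hW.preimage (hf.iterate _)) hcov
  refine ⟨t.sup id + 1, Nat.succ_pos _, fun z m => ?_⟩
  have hz : f^[m] z ∈ ⋃ n ∈ t, f^[n + 1] ⁻¹' W := ht (Set.mem_univ _)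
  obtain ⟨n, hnt, hnw⟩ := Set.mem_iUnion₂.1 hz
  have hsup : n ≤ t.sup id := Finset.le_sup (f := id) hnt
  refine ⟨m + n + 1, by omega, by omega, ?_⟩
  have : f^[n + 1] (f^[m] z) ∈ W := hnw
  rwa [← Function.iterate_add_apply, show n + 1 + m = m + n + 1 by omega] at this

/-- In a minimal system, every nonempty open set has nonempty preimage under
any iterate of the map. -/
lemma iterate_preimage_nonempty (S : MetricDynSystem) (hS : S.Minimal)
    {U : Set S.carrier} (hU : IsOpen U) (hne : U.Nonempty) (k : ℕ) :
    ∃ z : S.carrier, S.map^[k] z ∈ U := by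
  obtain ⟨x⟩ := S.carrier_nonempty
  obtain ⟨w, hw, hwU⟩ := (hS (S.map^[k] x)).exists_mem_open hU hne
  obtain ⟨n, hn, rfl⟩ := hw
  refine ⟨S.map^[n] x, ?_⟩
  rw [← Function.iterate_add_apply] at hwU ⊢
  rwa [Nat.add_comm] at hwU

lemma prodSystem_iterate (Z : ℕ → MetricDynSystem) (F : Finset ℕ) (n : ℕ)
    (z : (prodSystem Z F).carrier) (i : F) :
    (prodSystem Z F).map^[n] z i = (Z i.1).map^[n] (z i) := by
  induction n generalizing z with
  | zero => rfl
  | succ n ih =>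
    rw [Function.iterate_succ_apply, Function.iterate_succ_apply]
    exact ih _

theorem exists_index_with_uniformly_syndetic_return_times
    (X : ℕ → MetricDynSystem) (hX : ∀ i, (X i).Minimal) (hdisj : IsDisjointFamily X)
    (Y : MetricDynSystem) (hY : Y.Minimal)
    (V : Set Y.carrier) (hVopen : IsOpen V) (hVne : V.Nonempty) :
    ∃ i : ℕ, ∀ U : Set (X i).carrier, IsOpen U → U.Nonempty →
      ∃ s : ℕ, 0 < s ∧ ∀ (x : (X i).carrier) (y : Y.carrier) (m : ℕ),
        ∃ n : ℕ, m + 1 ≤ n ∧ n ≤ m + s ∧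
          n ∈ RetTimes (X i) x U ∩ RetTimes Y y V := by
  by_contra hcon
  push_neg at hcon
  -- For each `i`, produce an open set `U i` and a pair `(x i, y i)` whose joint orbit
  -- never enters `U i ×ˢ V` at positive times.
  have key : ∀ i : ℕ, ∃ U : Set (X i).carrier, IsOpen U ∧ U.Nonempty ∧
      ∃ x : (X i).carrier, ∃ y : Y.carrier, ∀ n, 0 < n →
        ¬((X i).map^[n] x ∈ U ∧ Y.map^[n] y ∈ V) := by
    intro i
    obtain ⟨U, hUo, hUne, hfail⟩ := hcon i
    refine ⟨U, hUo, hUne, ?_⟩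
    by_contra h
    push_neg at h
    have hvis : ∀ z : (X i).carrier × Y.carrier, ∃ n, 0 < n ∧
        (Prod.map (X i).map Y.map)^[n] z ∈ U ×ˢ V := by
      intro z
      obtain ⟨n, hn, h1, h2⟩ := h z.1 z.2
      exact ⟨n, hn, by simpa [Prod.map_iterate] using Set.mk_mem_prod h1 h2⟩
    obtain ⟨s, hs, hsynd⟩ := uniform_visit
      ((X i).continuous_map.prodMap Y.continuous_map) (hUo.prod hVopen) hvis
    obtain ⟨x, y, m, hbad⟩ := hfail s hs
    obtain ⟨n, h1, h2, h3⟩ := hsynd (x, y) m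
    rw [Prod.map_iterate] at h3
    exact hbad n h1 h2 ⟨⟨by omega, h3.1⟩, ⟨by omega, h3.2⟩⟩
  choose U hUo hUne x y havoid using key
  -- The orbit closures `M i` avoid `U i ×ˢ V`.
  set φ : ∀ i : ℕ, (X i).carrier × Y.carrier → (X i).carrier × Y.carrier :=
    fun i => Prod.map (X i).map Y.map with hφ
  set A : ∀ i : ℕ, Set ((X i).carrier × Y.carrier) :=
    fun i => {p | ∃ n, 0 < n ∧ (φ i)^[n] (x i, y i) = p} with hA
  set M : ∀ i : ℕ, Set ((X i).carrier × Y.carrier) := fun i => closure (A i) with hM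
  have hφc : ∀ i, Continuous (φ i) := fun i =>
    (X i).continuous_map.prodMap Y.continuous_map
  have hMinv : ∀ i n, Set.MapsTo (φ i)^[n] (M i) (M i) := by
    intro i
    refine Set.MapsTo.iterate ?_
    refine Set.MapsTo.closure ?_ (hφc i)
    rintro p ⟨n, hn, rfl⟩
    exact ⟨n + 1, by omega, by rw [Function.iterate_succ_apply']⟩
  have hMavoid : ∀ i, M i ∩ (U i ×ˢ V) = ∅ := by
    intro i
    have hsub : A i ⊆ (U i ×ˢ V)ᶜ := by
      rintro p ⟨n, hn, rfl⟩ hp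
      rw [Prod.map_iterate] at hp
      exact havoid i n hn ⟨hp.1, hp.2⟩
    have : M i ⊆ (U i ×ˢ V)ᶜ :=
      closure_minimal hsub (((hUo i).prod hVopen).isClosed_compl)
    rw [Set.eq_empty_iff_forall_notMem]
    exact fun p hp => this hp.1 hp.2
  -- Uniform syndeticity of visits to `V` in `Y`.
  obtain ⟨t, ht, hYsynd⟩ := uniform_visit Y.continuous_map hVopen
    (fun z => by
      obtain ⟨w, hw, hwV⟩ := (hY z).exists_mem_open hVopen hVne
      obtain ⟨n, hn, rfl⟩ := hw
      exact ⟨n, hn, hwV⟩)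
  -- `M i` projects onto `Y`: pick a common `y₀` with fiber points `x' i`.
  obtain ⟨y₀⟩ := Y.carrier_nonempty
  have hproj : ∀ i : ℕ, ∃ x' : (X i).carrier, (x', y₀) ∈ M i := by
    intro i
    have hMc : IsCompact (M i) := isClosed_closure.isCompact
    have hBc : IsClosed (Prod.snd '' M i) := (hMc.image continuous_snd).isClosed
    have hdense : Dense (Prod.snd '' M i) := by
      refine Dense.mono ?_ (hY (y i))
      rintro w ⟨n, hn, rfl⟩
      refine ⟨(φ i)^[n] (x i, y i), subset_closure ⟨n, hn, rfl⟩, ?_⟩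
      rw [hφ, Prod.map_iterate]
      rfl
    have : Prod.snd '' M i = Set.univ := hBc.closure_eq ▸ hdense.closure_eq
    obtain ⟨p, hp, hp2⟩ := this ▸ (Set.mem_univ y₀)
    exact ⟨p.1, by rwa [← hp2, Prod.mk.eta]⟩
  choose x' hx' using hproj
  -- Work in the product over `F = range t`.
  set F : Finset ℕ := Finset.range t with hF
  set p : (prodSystem X F).carrier := fun i => x' i.1 with hp
  set G : Set (prodSystem X F).carrier :=
    {z | ∀ i : F, (X i.1).map^[i.1 + 1] (z i) ∈ U i.1} with hG
  have hGo : IsOpen G := by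
    have : G = ⋂ i : F, (fun z : (prodSystem X F).carrier => z i) ⁻¹'
        ((X i.1).map^[i.1 + 1] ⁻¹' (U i.1)) := by
      ext z; simp [hG, Set.mem_iInter]
    rw [this]
    exact isOpen_iInter_of_finite fun i =>
      (((hUo i.1).preimage ((X i.1).continuous_map.iterate _)).preimage (continuous_apply i))
  have hGne : G.Nonempty := by
    have : ∀ i : F, ∃ z : (X i.1).carrier, (X i.1).map^[i.1 + 1] z ∈ U i.1 :=
      fun i => iterate_preimage_nonempty (X i.1) (hX i.1) (hUo i.1) (hUne i.1) _
    choose g hg using this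
    exact ⟨g, hg⟩
  -- By minimality of the product, the orbit of `p` enters `G`.
  obtain ⟨w, hw, hwG⟩ := (hdisj F p).exists_mem_open hGo hGne
  obtain ⟨n₀, hn₀, rfl⟩ := hw
  -- The orbit of `y₀` enters `V` in the window `[n₀ + 1, n₀ + t]`.
  obtain ⟨n, hn1, hn2, hnV⟩ := hYsynd y₀ n₀
  set j : ℕ := n - n₀ - 1 with hj
  have hjt : j < t := by omega
  have hjF : j ∈ F := Finset.mem_range.2 hjt
  -- Coordinate `j` of the product point lies in `U j` at time `n`.
  have hxU : (X j).map^[n] (x' j) ∈ U j := by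
    have := hwG ⟨j, hjF⟩
    rw [prodSystem_iterate] at this
    rw [← Function.iterate_add_apply] at this
    have hsum : j + 1 + n₀ = n := by omega
    rwa [hsum] at this
  -- But `(x' j, y₀) ∈ M j` and `M j` is forward invariant, contradiction.
  have hmem : (φ j)^[n] (x' j, y₀) ∈ M j := hMinv j n (hx' j)
  have hmem2 : ((X j).map^[n] (x' j), Y.map^[n] y₀) ∈ M j := by
    rwa [hφ, Prod.map_iterate] at hmem
  have : ((X j).map^[n] (x' j), Y.map^[n] y₀) ∈ M j ∩ (U j ×ˢ V) :=
    ⟨hmem2, Set.mk_mem_prod hxU hnV⟩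
  rw [hMavoid j] at this
  exact this
end

section
/- Let (X_i,T_i), i ∈ ℕ, be a disjoint collection of minimal topological dynamical systems. For each i let x_i ∈ X_i, let U_i ⊆ X_i be nonempty and open, and let H_i ⊆ ℕ be thick. Then the set A := ⋃_{i=1}^{∞} (R_{T_i}(x_i,U_i) ∩ H_i) is dynamically thick. -/
/-! ### Auxiliary definitions and lemmas -/

/-- The product map on the product of the carriers of two systems. -/
def dynProdMap (Y Z : MetricDynSystem) : Y.carrier × Z.carrier → Y.carrier × Z.carrier :=
  fun p => (Y.map p.1, Z.map p.2)

lemma dynProdMap_continuous (Y Z : MetricDynSystem) : Continuous (dynProdMap Y Z) :=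
  (Y.continuous_map.comp continuous_fst).prodMk (Z.continuous_map.comp continuous_snd)

lemma dynProdMap_iterate (Y Z : MetricDynSystem) (n : ℕ) (p : Y.carrier × Z.carrier) :
    (dynProdMap Y Z)^[n] p = (Y.map^[n] p.1, Z.map^[n] p.2) := by
  induction n generalizing p with
  | zero => rfl
  | succ n ih =>
    rw [Function.iterate_succ_apply, ih, Function.iterate_succ_apply,
      Function.iterate_succ_apply]
    rfl

lemma prodSystem_map_iterate (Z : ℕ → MetricDynSystem) (F : Finset ℕ) (n : ℕ)
    (z : (prodSystem Z F).carrier) (i : F) :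
    ((prodSystem Z F).map^[n] z) i = (Z i.1).map^[n] (z i) := by
  induction n with
  | zero => rfl
  | succ n ih =>
    simp only [Function.iterate_succ_apply']
    rw [← ih]
    rfl

lemma iterate_mem_of_invariant {γ : Type*} {f : γ → γ} {Q : Set γ}
    (hinv : ∀ p ∈ Q, f p ∈ Q) {p : γ} (hp : p ∈ Q) (n : ℕ) : f^[n] p ∈ Q := by
  induction n with
  | zero => simpa using hp
  | succ n ih => rw [Function.iterate_succ_apply']; exact hinv _ ih

lemma comm_iterate {γ δ : Type*} (Φ : γ → γ) (S : δ → δ) (π : γ → δ)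
    (hcomm : ∀ q, π (Φ q) = S (π q)) : ∀ n (q : γ), π (Φ^[n] q) = S^[n] (π q) := by
  intro n
  induction n with
  | zero => intro q; rfl
  | succ n ih =>
    intro q
    rw [Function.iterate_succ_apply, Function.iterate_succ_apply, ih (Φ q), hcomm q]

lemma orbit_closure_invariant {γ : Type*} [TopologicalSpace γ] {Φ : γ → γ}
    (hΦ : Continuous Φ) (p₀ : γ) :
    ∀ p ∈ closure (Set.range fun n => Φ^[n] p₀),
      Φ p ∈ closure (Set.range fun n => Φ^[n] p₀) := by
  intro p hp
  have h1 : Φ p ∈ closure (Φ '' Set.range fun n => Φ^[n] p₀) :=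
    image_closure_subset_closure_image hΦ ⟨p, hp, rfl⟩
  have hsub : Φ '' Set.range (fun n => Φ^[n] p₀) ⊆ Set.range (fun n => Φ^[n] p₀) := by
    rintro z ⟨w, ⟨n, rfl⟩, rfl⟩
    exact ⟨n + 1, by simpa using Function.iterate_succ_apply' Φ n p₀⟩
  exact closure_mono hsub h1

lemma orbit_closure_map_mem {γ δ : Type*} [TopologicalSpace γ] [TopologicalSpace δ]
    (Φ : γ → γ) (Ψ : δ → δ) (π : γ → δ) (hπ : Continuous π)
    (hcomm : ∀ q, π (Φ q) = Ψ (π q)) (p₀ : γ) (Q : Set δ) (hQ : IsClosed Q)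
    (hQinv : ∀ p ∈ Q, Ψ p ∈ Q) (hp₀ : π p₀ ∈ Q) :
    ∀ p ∈ closure (Set.range fun n => Φ^[n] p₀), π p ∈ Q := by
  intro p hp
  have h1 : π p ∈ closure (π '' Set.range fun n => Φ^[n] p₀) :=
    image_closure_subset_closure_image hπ ⟨p, hp, rfl⟩
  have h2 : π '' Set.range (fun n => Φ^[n] p₀) ⊆ Q := by
    rintro z ⟨w, ⟨n, rfl⟩, rfl⟩
    show π (Φ^[n] p₀) ∈ Q
    rw [comm_iterate Φ Ψ π hcomm n p₀]
    exact iterate_mem_of_invariant hQinv hp₀ n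
  exact closure_minimal h2 hQ h1

lemma orbit_closure_proj {γ δ : Type*} [TopologicalSpace γ] [CompactSpace γ]
    [TopologicalSpace δ] [T2Space δ]
    (Φ : γ → γ) (π : γ → δ) (S : δ → δ) (hπ : Continuous π)
    (hcomm : ∀ q, π (Φ q) = S (π q)) (p₀ : γ)
    (hdense : Dense {z : δ | ∃ n, 0 < n ∧ S^[n] (π p₀) = z}) (d : δ) :
    ∃ q ∈ closure (Set.range fun n => Φ^[n] p₀), π q = d := by
  have hcl : IsClosed (π '' closure (Set.range fun n => Φ^[n] p₀)) :=
    (isClosed_closure.isCompact.image hπ).isClosed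
  have hsub : {z : δ | ∃ n, 0 < n ∧ S^[n] (π p₀) = z}
      ⊆ π '' closure (Set.range fun n => Φ^[n] p₀) := by
    rintro z ⟨n, -, rfl⟩
    exact ⟨Φ^[n] p₀, subset_closure ⟨n, rfl⟩, comm_iterate Φ S π hcomm n p₀⟩
  have huniv : (Set.univ : Set δ) ⊆ π '' closure (Set.range fun n => Φ^[n] p₀) := by
    rw [← hdense.closure_eq]
    exact closure_minimal hsub hcl
  obtain ⟨q, hq, hqd⟩ := huniv (Set.mem_univ d)
  exact ⟨q, hq, hqd⟩

lemma minimal_visit (Z : MetricDynSystem) (hZ : Z.Minimal) (z : Z.carrier)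
    (U : Set Z.carrier) (hU : IsOpen U) (hUne : U.Nonempty) (t : ℕ) :
    ∃ n, t ≤ n ∧ 0 < n ∧ Z.map^[n] z ∈ U := by
  induction t with
  | zero =>
    obtain ⟨w, hw, hwU⟩ := (hZ z).exists_mem_open hU hUne
    obtain ⟨n, hn0, rfl⟩ := hw
    exact ⟨n, Nat.zero_le _, hn0, hwU⟩
  | succ t ih =>
    obtain ⟨n, htn, hn0, hmem⟩ := ih
    obtain ⟨w, hw, hwU⟩ := (hZ (Z.map^[n] z)).exists_mem_open hU hUne
    obtain ⟨m, hm0, rfl⟩ := hw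
    refine ⟨m + n, by omega, by omega, ?_⟩
    rw [Function.iterate_add_apply]
    exact hwU

lemma exists_iterate_preimage (Z : MetricDynSystem) (hZ : Z.Minimal) (U : Set Z.carrier)
    (hU : IsOpen U) (hUne : U.Nonempty) (t : ℕ) : ∃ w : Z.carrier, Z.map^[t] w ∈ U := by
  obtain ⟨n, htn, -, hmem⟩ := minimal_visit Z hZ (Classical.arbitrary _) U hU hUne t
  refine ⟨Z.map^[n - t] (Classical.arbitrary _), ?_⟩
  rw [← Function.iterate_add_apply]
  rw [show t + (n - t) = n by omega]
  exact hmem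

lemma uniform_visit_s8 (Y : MetricDynSystem) (hY : Y.Minimal) (V : Set Y.carrier)
    (hVopen : IsOpen V) (hVne : V.Nonempty) :
    ∃ g : ℕ, ∀ a : Y.carrier, ∃ t, 0 < t ∧ t ≤ g ∧ Y.map^[t] a ∈ V := by
  have hopen : ∀ n : ℕ, IsOpen {a : Y.carrier | 0 < n ∧ Y.map^[n] a ∈ V} := by
    intro n
    rcases Nat.eq_zero_or_pos n with h | h
    · have he : {a : Y.carrier | 0 < n ∧ Y.map^[n] a ∈ V} = ∅ := by
        ext a; simp [h]
      rw [he]; exact isOpen_empty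
    · have he : {a : Y.carrier | 0 < n ∧ Y.map^[n] a ∈ V} = Y.map^[n] ⁻¹' V := by
        ext a
        simp only [Set.mem_setOf_eq, Set.mem_preimage]
        exact and_iff_right h
      rw [he]
      exact hVopen.preimage (Y.continuous_map.iterate n)
  have hcover : (Set.univ : Set Y.carrier) ⊆
      ⋃ n : ℕ, {a : Y.carrier | 0 < n ∧ Y.map^[n] a ∈ V} := by
    intro a _
    obtain ⟨n, -, hn0, hmem⟩ := minimal_visit Y hY a V hVopen hVne 0
    exact Set.mem_iUnion.2 ⟨n, hn0, hmem⟩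
  obtain ⟨s, hs⟩ := isCompact_univ.elim_finite_subcover _ hopen hcover
  refine ⟨s.sup id, fun a => ?_⟩
  obtain ⟨n, hns, hn0, hmem⟩ := Set.mem_iUnion₂.1 (hs (Set.mem_univ a))
  exact ⟨n, hn0, Finset.le_sup (f := id) hns, hmem⟩

/-- The core contradiction: it cannot happen that for every `i ≤ g` there is a point of
`Y × X i` whose forward orbit avoids `V ×ˢ U i`. -/
lemma core (X : ℕ → MetricDynSystem) (hX : ∀ i, (X i).Minimal) (hdisj : IsDisjointFamily X)
    (U : ∀ i, Set (X i).carrier) (hUopen : ∀ i, IsOpen (U i)) (hUne : ∀ i, (U i).Nonempty)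
    (Y : MetricDynSystem) (hY : Y.Minimal) (V : Set Y.carrier) (hVopen : IsOpen V)
    (g : ℕ) (hg : ∀ a : Y.carrier, ∃ t, 0 < t ∧ t ≤ g ∧ Y.map^[t] a ∈ V)
    (hbad : ∀ i, i ≤ g → ∃ w : Y.carrier × (X i).carrier,
      ∀ n, 0 < n → (dynProdMap Y (X i))^[n] w ∉ V ×ˢ U i) : False := by
  classical
  have b : Y.carrier := Classical.arbitrary _
  -- For each i ≤ g, a closed invariant set avoiding V ×ˢ U i containing a point (b, c i).
  have main : ∀ i : (Finset.range (g + 1) : Finset ℕ), ∃ c : (X i.1).carrier,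
      ∃ Q : Set (Y.carrier × (X i.1).carrier), IsClosed Q ∧
        (∀ p ∈ Q, dynProdMap Y (X i.1) p ∈ Q) ∧
        (∀ p ∈ Q, p ∉ V ×ˢ U i.1) ∧ (b, c) ∈ Q := by
    intro i
    have hig : i.1 ≤ g := by
      have := Finset.mem_range.1 i.2; omega
    obtain ⟨w, hw⟩ := hbad i.1 hig
    obtain ⟨q, hqQ, hq1⟩ := orbit_closure_proj (dynProdMap Y (X i.1)) Prod.fst Y.map
      continuous_fst (fun p => rfl) (dynProdMap Y (X i.1) w) (hY _) b
    refine ⟨q.2, closure (Set.range fun n => (dynProdMap Y (X i.1))^[n] (dynProdMap Y (X i.1) w)),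
      isClosed_closure, orbit_closure_invariant (dynProdMap_continuous _ _) _, ?_, ?_⟩
    · intro p hp
      have hsub : closure (Set.range fun n => (dynProdMap Y (X i.1))^[n] (dynProdMap Y (X i.1) w))
          ⊆ (V ×ˢ U i.1)ᶜ := by
        refine closure_minimal ?_ (hVopen.prod (hUopen i.1)).isClosed_compl
        rintro z ⟨n, rfl⟩
        show (dynProdMap Y (X i.1))^[n] (dynProdMap Y (X i.1) w) ∈ (V ×ˢ U i.1)ᶜ
        rw [← Function.iterate_succ_apply]
        exact hw (n + 1) (Nat.succ_pos n)
      exact hsub hp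
    · rw [← hq1]
      exact hqQ
  choose c Qf hQcl hQinv hQav hQmem using main
  -- Points in each X i hitting U i at time exactly i.
  have hcs : ∀ i : (Finset.range (g + 1) : Finset ℕ),
      ∃ cc : (X i.1).carrier, (X i.1).map^[i.1] cc ∈ U i.1 :=
    fun i => exists_iterate_preimage (X i.1) (hX i.1) (U i.1) (hUopen i.1) (hUne i.1) i.1
  choose cstar hcstar using hcs
  -- Orbit closure of (b, c) in Y × prodSystem projects onto the (minimal!) product.
  obtain ⟨q, hqN, hq2⟩ := orbit_closure_proj
    (dynProdMap Y (prodSystem X (Finset.range (g + 1)))) Prod.snd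
    (prodSystem X (Finset.range (g + 1))).map continuous_snd (fun p => rfl)
    ((b, fun i => c i) : Y.carrier × (prodSystem X (Finset.range (g + 1))).carrier)
    (hdisj (Finset.range (g + 1)) (fun i => c i)) cstar
  have contra : ∀ i : (Finset.range (g + 1) : Finset ℕ), Y.map^[i.1] q.1 ∉ V := by
    intro i hiV
    have hqt : (dynProdMap Y (prodSystem X (Finset.range (g + 1))))^[i.1] q ∈
        closure (Set.range fun n => (dynProdMap Y (prodSystem X (Finset.range (g + 1))))^[n]
          ((b, fun i => c i) : Y.carrier × (prodSystem X (Finset.range (g + 1))).carrier)) :=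
      iterate_mem_of_invariant
        (orbit_closure_invariant (dynProdMap_continuous _ _) _) hqN i.1
    have hmem := orbit_closure_map_mem
      (dynProdMap Y (prodSystem X (Finset.range (g + 1)))) (dynProdMap Y (X i.1))
      (fun p => (p.1, p.2 i))
      (continuous_fst.prodMk ((continuous_apply i).comp continuous_snd))
      (fun p => rfl)
      ((b, fun i => c i) : Y.carrier × (prodSystem X (Finset.range (g + 1))).carrier)
      (Qf i) (hQcl i) (hQinv i) (hQmem i) _ hqt
    have hmem2 : (((dynProdMap Y (prodSystem X (Finset.range (g + 1))))^[i.1] q).1,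
        ((dynProdMap Y (prodSystem X (Finset.range (g + 1))))^[i.1] q).2 i) ∈ Qf i := hmem
    have e0 : (dynProdMap Y (prodSystem X (Finset.range (g + 1))))^[i.1] q
        = (Y.map^[i.1] q.1, (prodSystem X (Finset.range (g + 1))).map^[i.1] q.2) :=
      dynProdMap_iterate _ _ _ _
    have e1 : ((dynProdMap Y (prodSystem X (Finset.range (g + 1))))^[i.1] q).1
        = Y.map^[i.1] q.1 := by rw [e0]
    have e2 : ((dynProdMap Y (prodSystem X (Finset.range (g + 1))))^[i.1] q).2 i
        = (X i.1).map^[i.1] (cstar i) := by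
      rw [e0]
      show ((prodSystem X (Finset.range (g + 1))).map^[i.1] q.2) i = _
      rw [prodSystem_map_iterate, hq2]
    refine hQav i _ hmem2 (Set.mem_prod.2 ⟨?_, ?_⟩)
    · rw [e1]; exact hiV
    · rw [e2]; exact hcstar i
  obtain ⟨t, ht0, htg, htV⟩ := hg q.1
  exact contra ⟨t, Finset.mem_range.2 (by omega)⟩ htV

theorem dynThick_of_disjoint_family_return_times
    (X : ℕ → MetricDynSystem) (hX : ∀ i, (X i).Minimal) (hdisj : IsDisjointFamily X)
    (x : ∀ i, (X i).carrier) (U : ∀ i, Set (X i).carrier)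
    (hUopen : ∀ i, IsOpen (U i)) (hUne : ∀ i, (U i).Nonempty)
    (H : ℕ → Set ℕ) (hH : ∀ i, Thick (H i)) :
    DynThick (⋃ i : ℕ, RetTimes (X i) (x i) (U i) ∩ H i) := by
  intro Y hY b V hVopen hVne
  obtain ⟨g, hg⟩ := uniform_visit_s8 Y hY V hVopen hVne
  by_cases hcase : ∀ i, i ≤ g → ∃ w : Y.carrier × (X i).carrier,
      ∀ n, 0 < n → (dynProdMap Y (X i))^[n] w ∉ V ×ˢ U i
  · exact (core X hX hdisj U hUopen hUne Y hY V hVopen g hg hcase).elim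
  · push_neg at hcase
    obtain ⟨i, -, hgood⟩ := hcase
    have hopen : ∀ n : ℕ, IsOpen {w : Y.carrier × (X i).carrier |
        0 < n ∧ (dynProdMap Y (X i))^[n] w ∈ V ×ˢ U i} := by
      intro n
      rcases Nat.eq_zero_or_pos n with h | h
      · have he : {w : Y.carrier × (X i).carrier |
            0 < n ∧ (dynProdMap Y (X i))^[n] w ∈ V ×ˢ U i} = ∅ := by
          ext w; simp [h]
        rw [he]; exact isOpen_empty
      · have he : {w : Y.carrier × (X i).carrier |
            0 < n ∧ (dynProdMap Y (X i))^[n] w ∈ V ×ˢ U i}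
            = (dynProdMap Y (X i))^[n] ⁻¹' (V ×ˢ U i) := by
          ext w
          simp only [Set.mem_setOf_eq, Set.mem_preimage]
          exact and_iff_right h
        rw [he]
        exact (hVopen.prod (hUopen i)).preimage ((dynProdMap_continuous Y (X i)).iterate n)
    have hcover : (Set.univ : Set (Y.carrier × (X i).carrier)) ⊆
        ⋃ n : ℕ, {w : Y.carrier × (X i).carrier |
          0 < n ∧ (dynProdMap Y (X i))^[n] w ∈ V ×ˢ U i} := by
      intro w _
      exact Set.mem_iUnion.2 (hgood w)
    obtain ⟨s, hs⟩ := isCompact_univ.elim_finite_subcover _ hopen hcover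
    obtain ⟨d, hd0, hdmem⟩ := hH i (Finset.range (s.sup id + 1))
    obtain ⟨n, hns, hn0, hnmem⟩ := Set.mem_iUnion₂.1
      (hs (Set.mem_univ ((dynProdMap Y (X i))^[d] (b, x i))))
    have hkey : (dynProdMap Y (X i))^[n + d] (b, x i) ∈ V ×ˢ U i := by
      rw [Function.iterate_add_apply]
      exact hnmem
    rw [dynProdMap_iterate] at hkey
    have h1 : Y.map^[n + d] b ∈ V := (Set.mem_prod.1 hkey).1
    have h2 : (X i).map^[n + d] (x i) ∈ U i := (Set.mem_prod.1 hkey).2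
    have hHmem : n + d ∈ H i :=
      hdmem n (Finset.mem_range.2 (Nat.lt_succ_of_le (Finset.le_sup (f := id) hns)))
    exact ⟨n + d, Set.mem_iUnion.2 ⟨i, ⟨Nat.add_pos_left hn0 d, h2⟩, hHmem⟩,
      Nat.add_pos_left hn0 d, h1⟩
end

section
/- Let (X,T) be a minimal topological dynamical system and x ∈ X. For every piecewise syndetic set P ⊆ ℕ, the set {T^n x : n ∈ P} is somewhere dense in X, i.e. the closure of {T^n x : n ∈ P} has nonempty interior. -/
section Aux

open Set

variable (S : MetricDynSystem)

/-- In a minimal system the map is surjective. -/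
lemma MetricDynSystem.minimal_surjective (hS : S.Minimal) : Function.Surjective S.map := by
  obtain ⟨x⟩ := S.carrier_nonempty
  have hrange : IsClosed (Set.range S.map) := (isCompact_range S.continuous_map).isClosed
  have hsub : {z : S.carrier | ∃ n : ℕ, 0 < n ∧ S.map^[n] x = z} ⊆ Set.range S.map := by
    rintro z ⟨n, hn, rfl⟩
    obtain ⟨m, rfl⟩ := Nat.exists_eq_succ_of_ne_zero hn.ne'
    rw [Function.iterate_succ_apply']
    exact ⟨_, rfl⟩
  have huniv : Set.range S.map = Set.univ := by
    have h2 : closure {z : S.carrier | ∃ n : ℕ, 0 < n ∧ S.map^[n] x = z} ⊆ Set.range S.map :=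
      hrange.closure_subset_iff.mpr hsub
    rw [(hS x).closure_eq] at h2
    exact eq_univ_of_univ_subset h2
  intro y
  exact (huniv ▸ Set.mem_univ y : y ∈ Set.range S.map)

/-- Irreducibility: in a minimal system no nonempty closed set other than the whole
space maps onto the whole space. -/
lemma MetricDynSystem.minimal_irreducible (hS : S.Minimal) (A : Set S.carrier)
    (hAcl : IsClosed A) (hAne : A.Nonempty) (hAonto : S.map '' A = Set.univ) :
    A = Set.univ := by
  -- the decreasing sequence B 0 = A, B (n+1) = A ∩ T⁻¹(B n)
  let B : ℕ → Set S.carrier := fun n => Nat.rec A (fun _ Bn => A ∩ S.map ⁻¹' Bn) n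
  have hB0 : B 0 = A := rfl
  have hBsucc : ∀ n, B (n + 1) = A ∩ S.map ⁻¹' (B n) := fun n => rfl
  have hBsubA : ∀ n, B n ⊆ A := by
    intro n; cases n with
    | zero => exact le_refl A
    | succ m => rw [hBsucc]; exact Set.inter_subset_left
  have hBcl : ∀ n, IsClosed (B n) := by
    intro n; induction n with
    | zero => exact hAcl
    | succ m ih => rw [hBsucc]; exact hAcl.inter (ih.preimage S.continuous_map)
  have hBmono : ∀ n, B (n + 1) ⊆ B n := by
    intro n; induction n with
    | zero => rw [hBsucc, hB0]; exact Set.inter_subset_left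
    | succ m ih =>
        rw [hBsucc (m + 1), hBsucc m]
        exact Set.inter_subset_inter le_rfl (Set.preimage_mono ih)
  have hBne : ∀ n, (B n).Nonempty := by
    intro n; induction n with
    | zero => exact hAne
    | succ m ih =>
        obtain ⟨y, hy⟩ := ih
        have : y ∈ S.map '' A := hAonto ▸ Set.mem_univ y
        obtain ⟨a, haA, hay⟩ := this
        exact ⟨a, hBsucc m ▸ ⟨haA, by simpa [hay] using hy⟩⟩
  have hInt : (⋂ n, B n).Nonempty :=
    IsCompact.nonempty_iInter_of_sequence_nonempty_isCompact_isClosed B hBmono hBne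
      ((hBcl 0).isCompact) hBcl
  obtain ⟨z, hz⟩ := hInt
  have hzB : ∀ n, z ∈ B n := fun n => Set.mem_iInter.mp hz n
  -- the full forward orbit of z stays inside A
  have horb : ∀ k, S.map^[k] z ∈ ⋂ n, B n := by
    intro k; induction k with
    | zero => simpa using hz
    | succ m ih =>
        rw [Function.iterate_succ_apply']
        refine Set.mem_iInter.mpr fun n => ?_
        have : S.map^[m] z ∈ B (n + 1) := Set.mem_iInter.mp ih (n + 1)
        rw [hBsucc] at this
        exact this.2
  have horbA : {y : S.carrier | ∃ n : ℕ, 0 < n ∧ S.map^[n] z = y} ⊆ A := by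
    rintro y ⟨n, _, rfl⟩
    exact hBsubA 0 (Set.mem_iInter.mp (horb n) 0)
  have := hAcl.closure_subset_iff.mpr horbA
  rw [(hS z).closure_eq] at this
  exact eq_univ_of_univ_subset this

/-- Preimages (under iterates) of closed nowhere dense sets are nowhere dense. -/
lemma MetricDynSystem.preimage_nowhereDense (hS : S.Minimal) (D : Set S.carrier)
    (hDcl : IsClosed D) (hDint : interior D = ∅) :
    interior (S.map ⁻¹' D) = ∅ := by
  by_contra h
  obtain ⟨v, hv⟩ := Set.nonempty_iff_ne_empty.mpr h
  set V := interior (S.map ⁻¹' D) with hVdef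
  have hVsub : V ⊆ S.map ⁻¹' D := interior_subset
  set A := Vᶜ with hAdef
  have hAcl : IsClosed A := isOpen_interior.isClosed_compl
  have hAne : A.Nonempty := by
    by_contra hA
    rw [Set.not_nonempty_iff_eq_empty, Set.compl_empty_iff] at hA
    have : S.map ⁻¹' D = Set.univ := eq_univ_of_univ_subset (hA ▸ hVsub)
    have hDuniv : D = Set.univ := by
      apply eq_univ_of_forall
      intro y
      obtain ⟨a, rfl⟩ := S.minimal_surjective hS y
      exact (this ▸ Set.mem_univ a : a ∈ S.map ⁻¹' D)
    rw [hDuniv, interior_univ] at hDint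
    obtain ⟨p⟩ := S.carrier_nonempty
    exact (Set.eq_empty_iff_forall_notMem.mp hDint p) (Set.mem_univ p)
  have hAonto : S.map '' A = Set.univ := by
    have himcl : IsClosed (S.map '' A) :=
      (hAcl.isCompact.image S.continuous_map).isClosed
    have hsub : Dᶜ ⊆ S.map '' A := by
      intro y hy
      obtain ⟨a, rfl⟩ := S.minimal_surjective hS y
      refine ⟨a, ?_, rfl⟩
      intro haV
      exact hy (hVsub haV)
    have hdense : Dense Dᶜ := interior_eq_empty_iff_dense_compl.mp hDint
    have := himcl.closure_subset_iff.mpr hsub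
    rw [hdense.closure_eq] at this
    exact eq_univ_of_univ_subset this
  have := S.minimal_irreducible hS A hAcl hAne hAonto
  have hVempty : V = ∅ := by
    rw [← Set.compl_univ, ← this, hAdef, compl_compl]
  exact h (hVdef ▸ hVempty)

lemma MetricDynSystem.iterate_preimage_nowhereDense (hS : S.Minimal) (D : Set S.carrier)
    (hDcl : IsClosed D) (hDint : interior D = ∅) (i : ℕ) :
    interior (S.map^[i] ⁻¹' D) = ∅ := by
  induction i with
  | zero => simpa using hDint
  | succ m ih =>
      have : S.map^[m + 1] ⁻¹' D = S.map ⁻¹' (S.map^[m] ⁻¹' D) := by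
        rw [Function.iterate_succ, Set.preimage_comp]
      rw [this]
      exact S.preimage_nowhereDense hS _ (hDcl.preimage (S.continuous_map.iterate m)) ih

end Aux

theorem orbit_along_piecewiseSyndetic_somewhere_dense
    (S : MetricDynSystem) (hS : S.Minimal) (x : S.carrier)
    (P : Set ℕ) (hP : PiecewiseSyndetic P) :
    (interior (closure ((fun n => S.map^[n] x) '' P))).Nonempty := by
  classical
  obtain ⟨N, hN, hthick⟩ := hP
  set C := closure ((fun n => S.map^[n] x) '' P) with hCdef
  have hCcl : IsClosed C := isClosed_closure
  by_contra h
  rw [Set.not_nonempty_iff_eq_empty] at h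
  -- each preimage T^[i]⁻¹ C is closed and nowhere dense
  have hpre_cl : ∀ i : ℕ, IsClosed (S.map^[i] ⁻¹' C) :=
    fun i => hCcl.preimage (S.continuous_map.iterate i)
  have hpre_int : ∀ i : ℕ, interior (S.map^[i] ⁻¹' C) = ∅ :=
    fun i => S.iterate_preimage_nowhereDense hS C hCcl h i
  -- the union K of preimages over i ∈ [1,N]
  set K := ⋃ i ∈ Finset.Icc 1 N, (S.map^[i] ⁻¹' C) with hKdef
  have hKcl : IsClosed K := by
    apply Set.Finite.isClosed_biUnion (Finset.Icc 1 N).finite_toSet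
    intro i _
    exact hpre_cl i
  -- K contains the orbit along the thick set Q, which is dense
  have hKuniv : K = Set.univ := by
    have hKdense : Dense K := by
      rw [Metric.dense_iff]
      intro y ε hε
      -- the ball U := ball y ε is open and nonempty; cover X by preimages of U
      set U := Metric.ball y ε with hUdef
      have hUopen : IsOpen U := Metric.isOpen_ball
      have hcover : Set.univ ⊆ ⋃ n : ℕ, (S.map^[n + 1] ⁻¹' U) := by
        intro z _
        obtain ⟨w, ⟨n, hn, hw⟩, hwU⟩ :=
          (hS z).exists_mem_open hUopen ⟨y, Metric.mem_ball_self hε⟩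
        obtain ⟨m, rfl⟩ := Nat.exists_eq_succ_of_ne_zero hn.ne'
        exact Set.mem_iUnion.mpr ⟨m, by rw [Set.mem_preimage, hw]; exact hwU⟩
      obtain ⟨F', hF'⟩ := isCompact_univ.elim_finite_subcover
        (fun n : ℕ => S.map^[n + 1] ⁻¹' U)
        (fun n => hUopen.preimage (S.continuous_map.iterate (n + 1))) hcover
      -- apply thickness to the shifted finite set
      obtain ⟨s, hs, hsQ⟩ := hthick (F'.image (· + 1))
      have hx : S.map^[s] x ∈ ⋃ n ∈ F', (S.map^[n + 1] ⁻¹' U) := hF' (Set.mem_univ _)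
      obtain ⟨n, hnF', hnU⟩ := Set.mem_iUnion₂.mp hx
      have hmQ : (n + 1) + s ∈ ⋃ i ∈ Finset.Icc 1 N, NSub P i :=
        hsQ (n + 1) (Finset.mem_image.mpr ⟨n, hnF', rfl⟩)
      obtain ⟨i, hi, him⟩ := Set.mem_iUnion₂.mp hmQ
      rw [Finset.mem_Icc] at hi
      -- the point T^[(n+1)+s] x lies in U ∩ K
      refine ⟨S.map^[(n + 1) + s] x, ?_, ?_⟩
      · rw [Function.iterate_add_apply]
        exact hnU
      · rw [hKdef]
        refine Set.mem_biUnion (Finset.mem_Icc.mpr hi) ?_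
        have hmem : ((n + 1) + s) + i ∈ P := him.2
        show S.map^[i] (S.map^[(n + 1) + s] x) ∈ C
        rw [← Function.iterate_add_apply]
        exact subset_closure ⟨i + ((n + 1) + s), by rwa [Nat.add_comm i], rfl⟩
    rw [← hKcl.closure_eq]
    exact hKdense.closure_eq
  -- Baire category: one of the finitely many closed sets has nonempty interior
  have : ∃ i : ↥(Finset.Icc 1 N), (interior (S.map^[(i : ℕ)] ⁻¹' C)).Nonempty := by
    apply nonempty_interior_of_iUnion_of_closed (fun i => hpre_cl _)
    rw [Set.eq_univ_iff_forall]
    intro y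
    have hy : y ∈ K := hKuniv ▸ Set.mem_univ y
    obtain ⟨i, hi, hyi⟩ := Set.mem_iUnion₂.mp hy
    exact Set.mem_iUnion.mpr ⟨⟨i, hi⟩, hyi⟩
  obtain ⟨i, hi⟩ := this
  rw [hpre_int i] at hi
  exact Set.not_nonempty_empty hi
end
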